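/- arXiv:2203.15079 — 7 statements merged into one kernel-verified Lean document; each statement's English description precedes it below -/
import Mathlib

section
/- For a finite connected multigraph G, any vertex s, and any degree-zero divisor D, there exists a divisor D' that is nonnegative on all vertices other than s, has total degree zero, and is equivalent to D modulo the image of the graph Laplacian over the integers. -/
open Finset

noncomputable section
open scoped Classical

/-- A finite multigraph without loops: each edge has an unordered pair of
distinct endpoints. -/
structure Multigraph (V E : Type) where
  ends : E → Sym2 V
  loopless : ∀ e, ¬ (ends e).IsDiag

/-- A ribbon structure: for each vertex, a "next edge" map describing the
cyclic ordering of the edges incident to that vertex. -/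
structure RibbonStruct (V E : Type) where
  next : V → E → E

/-- The group of degree-zero divisors on the vertex set `V`. -/
def Div0 (V : Type) [Fintype V] : AddSubgroup (V → ℤ) where
  carrier := {D | ∑ v, D v = 0}
  add_mem' := by
    intro a b ha hb
    simp only [Set.mem_setOf_eq, Pi.add_apply, Finset.sum_add_distrib] at *
    omega
  zero_mem' := by simp
  neg_mem' := by
    intro a ha
    simp only [Set.mem_setOf_eq, Pi.neg_apply, Finset.sum_neg_distrib] at *
    omega

/-- The divisor `c - s`. -/
def chipDiv {V : Type} [DecidableEq V] (c s : V) : V → ℤ :=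
  fun v => (if v = c then 1 else 0) - (if v = s then 1 else 0)

namespace Multigraph

variable {V E : Type} [Fintype V] [Fintype E] [DecidableEq V] [DecidableEq E]

/-- Two vertices are adjacent if they are the two endpoints of some edge. -/
def Adj (G : Multigraph V E) (x y : V) : Prop := ∃ e : E, G.ends e = s(x, y)

/-- A multigraph is connected if any two vertices are joined by a walk. -/
def Connected (G : Multigraph V E) : Prop := ∀ x y : V, Relation.ReflTransGen G.Adj x y

/-- Adjacency using only edges from the set `T`. -/
def AdjOn (G : Multigraph V E) (T : Finset E) (x y : V) : Prop := ∃ e ∈ T, G.ends e = s(x, y)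

/-- Reachability using only edges from the set `T`. -/
def ReachOn (G : Multigraph V E) (T : Finset E) (x y : V) : Prop :=
  Relation.ReflTransGen (G.AdjOn T) x y

/-- A spanning tree: a spanning connected edge set of the correct cardinality. -/
def IsSpanningTree (G : Multigraph V E) (T : Finset E) : Prop :=
  (∀ x y : V, G.ReachOn T x y) ∧ T.card = Fintype.card V - 1

/-- The degree of a vertex: the number of incident edges. -/
def degree (G : Multigraph V E) (v : V) : ℕ := (univ.filter fun e => v ∈ G.ends e).card

/-- The number of edges of `T` incident to `v`. -/
def treeDegree (G : Multigraph V E) (T : Finset E) (v : V) : ℕ :=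
  (T.filter fun e => v ∈ G.ends e).card

/-- A leaf vertex of `T`: incident to exactly one edge of `T`. -/
def IsLeafVertex (G : Multigraph V E) (T : Finset E) (v : V) : Prop := G.treeDegree T v = 1

/-- A leaf edge of `T`: an edge of `T` incident to a leaf vertex. -/
def IsLeafEdge (G : Multigraph V E) (T : Finset E) (e : E) : Prop :=
  e ∈ T ∧ ∃ v, v ∈ G.ends e ∧ G.IsLeafVertex T v

/-- Adjacency within `T` avoiding the vertex `x`. -/
def AdjOnAvoid (G : Multigraph V E) (T : Finset E) (x : V) (a b : V) : Prop :=
  G.AdjOn T a b ∧ a ≠ x ∧ b ≠ x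

/-- "The path in `T` from `a` to `r` passes through `y`": `a` cannot reach `r`
within `T` while avoiding the vertex `y`. -/
def PathThrough (G : Multigraph V E) (T : Finset E) (r a y : V) : Prop :=
  ¬ Relation.ReflTransGen (G.AdjOnAvoid T y) a r

/-- Adjacency in `G` avoiding the vertex `x`. -/
def AdjAvoid (G : Multigraph V E) (x : V) (a b : V) : Prop := G.Adj a b ∧ a ≠ x ∧ b ≠ x

/-- 2-connected: connected and with no cut vertices. -/
def TwoConnected (G : Multigraph V E) : Prop :=
  G.Connected ∧ ∀ x a b : V, a ≠ x → b ≠ x →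
    Relation.ReflTransGen (G.AdjAvoid x) a b

/-- The row of the Laplacian matrix of `G` corresponding to the vertex `v`
(the divisor obtained by "firing" the vertex `v`, negated). -/
def lapRow (G : Multigraph V E) (v : V) : V → ℤ := fun w =>
  if w = v then (G.degree v : ℤ) else -((univ.filter fun e => G.ends e = s(v, w)).card : ℤ)

/-- The subgroup of divisors generated by the rows of the Laplacian, i.e. the
integer image of the Laplacian. -/
def LapSubgroup (G : Multigraph V E) : AddSubgroup (V → ℤ) :=
  AddSubgroup.closure (Set.range G.lapRow)

/-- Two divisors are firing equivalent when their difference lies in the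
integer image of the Laplacian. -/
def FiringEquiv (G : Multigraph V E) (D D' : V → ℤ) : Prop := D - D' ∈ G.LapSubgroup

/-- The sandpile group (Picard group) `Pic⁰(G)`:
degree-zero divisors modulo the image of the Laplacian. -/
def Pic0 (G : Multigraph V E) : Type :=
  Div0 V ⧸ ((G.LapSubgroup).addSubgroupOf (Div0 V))

instance (G : Multigraph V E) : AddCommGroup G.Pic0 :=
  QuotientAddGroup.Quotient.addCommGroup _

/-- The class in `Pic⁰(G)` of a degree-zero divisor. -/
def picClass (G : Multigraph V E) (D : V → ℤ) (hD : D ∈ Div0 V) : G.Pic0 :=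
  QuotientAddGroup.mk ⟨D, hD⟩

/-- `cfg` is the rotor configuration of the tree `T` with sink `s` (each
non-sink vertex carries the first edge of `T` on its path to `s`). -/
def IsRotorCfg (G : Multigraph V E) (s : V) (T : Finset E) (cfg : V → E) : Prop :=
  ∀ v, v ≠ s → cfg v ∈ T ∧ v ∈ G.ends (cfg v) ∧ ¬ G.ReachOn (T.erase (cfg v)) v s

/-- One step along the rotors of `cfg` (with sink `s`):
from `a ≠ s` across the rotor at `a` to its other endpoint `b`. -/
def RotorStep (G : Multigraph V E) (s : V) (cfg : V → E) (a b : V) : Prop :=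
  a ≠ s ∧ G.ends (cfg a) = s(a, b)

/-- A rotor configuration is acyclic: following rotors never returns to a
starting vertex. -/
def RotorAcyclic (G : Multigraph V E) (s : V) (cfg : V → E) : Prop :=
  ∀ a : V, ¬ Relation.TransGen (G.RotorStep s cfg) a a

/-- One step of the single-chip rotor-routing process: the state is a pair
(rotor configuration, chip position); the rotor at the chip's position is
rotated one step in the cyclic order `χ`, and the chip then moves across the
new rotor. -/
def RRStep (G : Multigraph V E) (χ : RibbonStruct V E) (p q : (V → E) × V) : Prop :=
  q.1 = Function.update p.1 p.2 (χ.next p.2 (p.1 p.2)) ∧ G.ends (q.1 p.2) = s(p.2, q.2)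

/-- A run of length `n` of the rotor-routing algorithm with sink `s`. -/
def IsRun (G : Multigraph V E) (χ : RibbonStruct V E) (s : V)
    (σ : ℕ → (V → E) × V) (n : ℕ) : Prop :=
  ∀ i, i < n → (σ i).2 ≠ s ∧ G.RRStep χ (σ i) (σ i.succ)

/-- At step `i` of the run `σ`, the chip crosses the edge `e` from `u` to `w`. -/
def Crosses (G : Multigraph V E) (σ : ℕ → (V → E) × V) (i : ℕ) (e : E) (u w : V) : Prop :=
  (σ i).2 = u ∧ (σ (i + 1)).2 = w ∧ (σ (i + 1)).1 u = e ∧ G.ends e = s(u, w)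

/-- A dart of `G`: an edge together with a chosen head. -/
def Dart (G : Multigraph V E) : Type := {p : E × V // p.2 ∈ G.ends p.1}

/-- The "next dart along a face" relation determined by the ribbon structure. -/
def FaceRel (G : Multigraph V E) (χ : RibbonStruct V E) (a b : G.Dart) : Prop :=
  b.1.1 = χ.next a.1.2 a.1.1 ∧ G.ends b.1.1 = s(a.1.2, b.1.2)

/-- The number of faces of the ribbon graph `(G, χ)`: the number of orbits of
the face map on darts. -/
def numFaces (G : Multigraph V E) (χ : RibbonStruct V E) : ℕ :=
  Nat.card (Quot (G.FaceRel χ))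

end Multigraph

/-- The axioms making `χ` an honest ribbon structure on `G`: at each vertex,
`next` is a bijection preserving the incident edges and acting transitively
(i.e. cyclically) on them. -/
def RibbonStruct.IsRibbon {V E : Type} [Fintype V] [Fintype E]
    (χ : RibbonStruct V E) (G : Multigraph V E) : Prop :=
  (∀ v : V, Function.Bijective (χ.next v)) ∧
  (∀ v e, v ∈ G.ends e → v ∈ G.ends (χ.next v e)) ∧
  (∀ v e f, v ∈ G.ends e → v ∈ G.ends f → ∃ m : ℕ, (χ.next v)^[m] e = f)

/-- A plane graph: a connected ribbon graph of genus 0 (Euler's formula). -/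
def Multigraph.IsPlane {V E : Type} [Fintype V] [Fintype E] [DecidableEq V] [DecidableEq E]
    (G : Multigraph V E) (χ : RibbonStruct V E) : Prop :=
  G.Connected ∧ χ.IsRibbon G ∧
    Fintype.card V + G.numFaces χ = Fintype.card E + 2

/-- An isomorphism of ribbon graphs: a pair of bijections on vertices and
edges preserving incidence and the cyclic orderings. -/
def IsRibbonIso {V E V' E' : Type}
    (G : Multigraph V E) (χ : RibbonStruct V E)
    (G' : Multigraph V' E') (χ' : RibbonStruct V' E')
    (φV : V ≃ V') (φE : E ≃ E') : Prop :=
  (∀ e, G'.ends (φE e) = (G.ends e).map φV) ∧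
  ∀ v e, v ∈ G.ends e → φE (χ.next v e) = χ'.next (φV v) (φE e)



section EffAux

namespace Multigraph

variable {V E : Type} [Fintype V] [Fintype E] [DecidableEq V] [DecidableEq E]

/-- Edge multiplicity between two vertices. -/
def mult (G : Multigraph V E) (v w : V) : ℕ := (univ.filter fun e => G.ends e = s(v, w)).card

lemma mult_self (G : Multigraph V E) (v : V) : G.mult v v = 0 := by
  unfold mult
  rw [Finset.card_eq_zero, Finset.filter_eq_empty_iff]
  intro e _ h
  exact G.loopless e (h ▸ (by simp [Sym2.isDiag_iff_proj_eq] : (s(v,v) : Sym2 V).IsDiag))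

lemma sum_mult (G : Multigraph V E) (w : V) : ∑ v, G.mult w v = G.degree w := by
  classical
  unfold degree mult
  rw [Finset.card_eq_sum_card_fiberwise
    (f := fun e => if h : w ∈ G.ends e then Sym2.Mem.other' h else w) (t := univ)
    (fun e _ => mem_univ _)]
  apply Finset.sum_congr rfl
  intro v _
  congr 1
  rw [Finset.filter_filter]
  apply Finset.filter_congr
  intro e _
  constructor
  · intro h
    have hw : w ∈ G.ends e := by rw [h]; exact Sym2.mem_mk_left _ _
    refine ⟨hw, ?_⟩
    rw [dif_pos hw]
    have h2 : s(w, Sym2.Mem.other' hw) = s(w, v) := by rw [Sym2.other_spec' hw, h]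
    have hne : w ≠ v := fun hwv => G.loopless e (by rw [h, ← hwv]; simp [Sym2.isDiag_iff_proj_eq])
    rcases Sym2.eq_iff.1 h2 with ⟨_, h3⟩ | ⟨h3, _⟩
    · exact h3
    · exact absurd h3 hne
  · rintro ⟨he, hf⟩
    rw [dif_pos he] at hf
    rw [← hf]
    exact (Sym2.other_spec' he).symm

lemma adj_mult_pos (G : Multigraph V E) {a b : V} (h : G.Adj a b) : 0 < G.mult a b := by
  obtain ⟨e, he⟩ := h
  exact Finset.card_pos.2 ⟨e, by simp [mult, he]⟩

/-- Harmonic functions on a connected multigraph are constant. -/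
lemma harmonic_const (G : Multigraph V E) (hG : G.Connected) (c : V → ℚ)
    (hc : ∀ w, (G.degree w : ℚ) * c w = ∑ v, (G.mult w v : ℚ) * c v) (x y : V) :
    c x = c y := by
  have : Nonempty V := ⟨x⟩
  obtain ⟨w0, hw0⟩ := Finite.exists_max c
  have step : ∀ a b : V, c a = c w0 → G.Adj a b → c b = c w0 := by
    intro a b ha hab
    by_contra hb
    have hblt : c b < c w0 := lt_of_le_of_ne (hw0 b) hb
    have hle : ∀ v ∈ univ, (G.mult a v : ℚ) * c v ≤ (G.mult a v : ℚ) * c w0 :=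
      fun v _ => mul_le_mul_of_nonneg_left (hw0 v) (by positivity)
    have hlt : ∑ v, (G.mult a v : ℚ) * c v < ∑ v, (G.mult a v : ℚ) * c w0 := by
      refine Finset.sum_lt_sum hle ⟨b, mem_univ _, ?_⟩
      exact mul_lt_mul_of_pos_left hblt (by exact_mod_cast G.adj_mult_pos hab)
    have heq : ∑ v, (G.mult a v : ℚ) * c w0 = (G.degree a : ℚ) * c a := by
      rw [← Finset.sum_mul, ha]
      norm_cast
      rw [G.sum_mult a]
    rw [heq, hc a] at hlt
    exact lt_irrefl _ hlt
  have hall : ∀ z, c z = c w0 := by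
    intro z
    have hreach := hG w0 z
    induction hreach with
    | refl => rfl
    | tail _ hbc ih => exact step _ _ ih hbc
  rw [hall x, hall y]

/-- The rational chip divisor lies in the rational span of the Laplacian rows. -/
lemma chip_mem_span (G : Multigraph V E) (hG : G.Connected) (x y : V) :
    (fun v => ((chipDiv x y v : ℤ) : ℚ)) ∈
      Submodule.span ℚ (Set.range fun w => fun v => ((G.lapRow w v : ℤ) : ℚ)) := by
  classical
  set p : Submodule ℚ (V → ℚ) :=
    Submodule.span ℚ (Set.range fun w => fun v => ((G.lapRow w v : ℤ) : ℚ)) with hp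
  by_contra hmem
  have hq : Submodule.Quotient.mk (p := p) (fun v => ((chipDiv x y v : ℤ) : ℚ)) ≠ 0 :=
    fun h => hmem ((Submodule.Quotient.mk_eq_zero p).1 h)
  obtain ⟨φ, hφ⟩ : ∃ φ : Module.Dual ℚ ((V → ℚ) ⧸ p),
      φ (Submodule.Quotient.mk (fun v => ((chipDiv x y v : ℤ) : ℚ))) ≠ 0 := by
    by_contra h
    push_neg at h
    exact hq ((Module.forall_dual_apply_eq_zero_iff ℚ _).1 h)
  set f : (V → ℚ) →ₗ[ℚ] ℚ := φ.comp p.mkQ with hf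
  have hfvan : ∀ w, f (fun v => ((G.lapRow w v : ℤ) : ℚ)) = 0 := by
    intro w
    have : (fun v => ((G.lapRow w v : ℤ) : ℚ)) ∈ p :=
      Submodule.subset_span ⟨w, rfl⟩
    simp [hf, LinearMap.comp_apply, Submodule.mkQ_apply,
      (Submodule.Quotient.mk_eq_zero p).2 this]
  set c : V → ℚ := fun v => f (fun j => if v = j then 1 else 0) with hcdef
  have hfx : ∀ u : V → ℚ, f u = ∑ v, u v * c v := by
    intro u
    rw [LinearMap.pi_apply_eq_sum_univ f u]
    simp [smul_eq_mul, hcdef]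
  have hharm : ∀ w, (G.degree w : ℚ) * c w = ∑ v, (G.mult w v : ℚ) * c v := by
    intro w
    have h0 := hfvan w
    rw [hfx] at h0
    have hsplit : ∑ v, ((G.lapRow w v : ℤ) : ℚ) * c v
        = ((G.lapRow w w : ℤ) : ℚ) * c w + ∑ v ∈ univ.erase w, ((G.lapRow w v : ℤ) : ℚ) * c v :=
      (Finset.add_sum_erase univ _ (mem_univ w)).symm
    have herase : ∑ v ∈ univ.erase w, ((G.lapRow w v : ℤ) : ℚ) * c v
        = ∑ v ∈ univ.erase w, -((G.mult w v : ℚ) * c v) := by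
      apply Finset.sum_congr rfl
      intro v hv
      have hvw : v ≠ w := (Finset.mem_erase.1 hv).1
      simp [Multigraph.lapRow, Multigraph.mult, hvw]
    have herase2 : ∑ v ∈ univ.erase w, -((G.mult w v : ℚ) * c v)
        = -(∑ v, (G.mult w v : ℚ) * c v) + (G.mult w w : ℚ) * c w := by
      rw [Finset.sum_neg_distrib, Finset.sum_erase_eq_sub (mem_univ w)]
      ring
    have hww : ((G.lapRow w w : ℤ) : ℚ) = (G.degree w : ℚ) := by
      simp [Multigraph.lapRow]
    rw [hsplit, herase, herase2, hww, G.mult_self w] at h0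
    push_cast at h0 ⊢
    linarith
  have hcxy : c x = c y := G.harmonic_const hG c hharm x y
  apply hφ
  have : f (fun v => ((chipDiv x y v : ℤ) : ℚ)) = 0 := by
    rw [hfx]
    have : ∀ v, ((chipDiv x y v : ℤ) : ℚ) * c v
        = (if v = x then 1 else 0) * c v - (if v = y then 1 else 0) * c v := by
      intro v
      simp [chipDiv]
      split_ifs <;> ring
    rw [Finset.sum_congr rfl fun v _ => this v]
    simp [Finset.sum_sub_distrib, Finset.sum_ite_eq', hcxy]
  simpa [hf, LinearMap.comp_apply] using this

/-- Some positive multiple of each chip divisor lies in the Laplacian subgroup. -/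
lemma exists_multiple_chip_mem (G : Multigraph V E) (hG : G.Connected) (x y : V) :
    ∃ M : ℤ, 0 < M ∧ M • chipDiv x y ∈ G.LapSubgroup := by
  classical
  obtain ⟨c, hc⟩ := (Submodule.mem_span_range_iff_exists_fun (R := ℚ)).1 (G.chip_mem_span hG x y)
  set M : ℕ := ∏ w, (c w).den with hM
  have hMpos : 0 < M := Finset.prod_pos fun w _ => (c w).pos
  have hz : ∀ w : V, ∃ z : ℤ, (z : ℚ) = (M : ℚ) * c w := by
    intro w
    obtain ⟨k, hk⟩ : ((c w).den : ℕ) ∣ M := Finset.dvd_prod_of_mem _ (mem_univ w)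
    refine ⟨(c w).num * k, ?_⟩
    have hnum : ((c w).num : ℚ) = c w * ((c w).den : ℚ) := (Rat.mul_den_eq_num (c w)).symm
    push_cast [hk]
    rw [hnum]
    ring
  choose z hzspec using hz
  refine ⟨(M : ℤ), by exact_mod_cast hMpos, ?_⟩
  have hfun : (M : ℤ) • chipDiv x y = ∑ w, z w • G.lapRow w := by
    funext v
    have hcv := congrFun hc v
    simp only [Finset.sum_apply, Pi.smul_apply, smul_eq_mul] at hcv ⊢
    have : ((M : ℤ) * chipDiv x y v : ℤ) = ((∑ w, z w * G.lapRow w v : ℤ) : ℤ) := by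
      have hQ : (((M : ℤ) * chipDiv x y v : ℤ) : ℚ) = ((∑ w, z w * G.lapRow w v : ℤ) : ℚ) := by
        push_cast
        rw [← hcv]
        rw [Finset.mul_sum]
        apply Finset.sum_congr rfl
        intro w _
        rw [← mul_assoc, hzspec w]
      exact_mod_cast hQ
    exact this
  rw [hfun]
  exact AddSubgroup.sum_mem _ fun w _ =>
    AddSubgroup.zsmul_mem _ (AddSubgroup.subset_closure (Set.mem_range_self w)) _

lemma chipDiv_mem_Div0 (x y : V) : chipDiv x y ∈ Div0 V := by
  simp [Div0, chipDiv, Finset.sum_sub_distrib]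

end Multigraph

end EffAux

/-- For a finite connected multigraph `G`, any vertex `s` and any
degree-zero divisor `D`, there is a degree-zero divisor `D'` that is
nonnegative away from `s` and firing equivalent to `D`. -/
theorem exists_effective_away_from_sink
    {V E : Type} [Fintype V] [Fintype E] [DecidableEq V] [DecidableEq E]
    (G : Multigraph V E) (hG : G.Connected) (s : V) (D : V → ℤ) (hD : D ∈ Div0 V) :
    ∃ D' : V → ℤ, D' ∈ Div0 V ∧ (∀ v, v ≠ s → 0 ≤ D' v) ∧ G.FiringEquiv D D' := by
  classical
  choose M hMpos hMmem using fun v => G.exists_multiple_chip_mem hG v s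
  set k : V → ℤ := fun v => max 0 (-D v) with hk
  set D' : V → ℤ := D + ∑ v ∈ univ.erase s, (k v * M v) • chipDiv v s with hD'
  have hterm : ∀ v, (k v * M v) • chipDiv v s ∈ G.LapSubgroup := by
    intro v
    rw [mul_smul]
    exact AddSubgroup.zsmul_mem _ (hMmem v) _
  refine ⟨D', ?_, ?_, ?_⟩
  · apply AddSubgroup.add_mem _ hD
    exact AddSubgroup.sum_mem _ fun v _ =>
      AddSubgroup.zsmul_mem _ (Multigraph.chipDiv_mem_Div0 v s) _
  · intro w hw
    have hval : D' w = D w + k w * M w := by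
      rw [hD']
      simp only [Pi.add_apply, Finset.sum_apply, Pi.smul_apply, smul_eq_mul]
      congr 1
      rw [Finset.sum_eq_single w]
      · simp [chipDiv, hw]
      · intro v _ hvw
        simp [chipDiv, hw, Ne.symm hvw]
      · intro h
        exact absurd (Finset.mem_erase.2 ⟨hw, mem_univ w⟩) h
    rw [hval]
    have hk0 : 0 ≤ k w := le_max_left _ _
    have hkD : -D w ≤ k w := le_max_right _ _
    have : k w ≤ k w * M w := le_mul_of_one_le_right hk0 (hMpos w)
    linarith
  · show D - D' ∈ G.LapSubgroup
    have : D - D' = -∑ v ∈ univ.erase s, (k v * M v) • chipDiv v s := by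
      rw [hD']; ring
    rw [this]
    exact AddSubgroup.neg_mem _ (AddSubgroup.sum_mem _ fun v _ => hterm v)

end
end

section
/- Let G be a 2-connected multigraph and let T^start and T^goal be spanning trees of G. Then there exists a finite sequence of spanning trees T^0 = T^start, T^1, ..., T^k = T^goal such that for each i, T^i is obtained from T^{i-1} by removing a single leaf edge of T^{i-1} and adding a single edge of G not in T^{i-1}. -/
open Finset

noncomputable section
open scoped Classical

/-!
Fix a root `r` and let `A` be the set of vertices joined to `r` by edges common to the current
tree `T` and the goal tree `T'`. If `A ≠ V`, some edge `f` of `T'` joins a vertex `y ∉ A` to `A`.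
Leaf exchanges make `y` a leaf of `T` while keeping every edge of `T` off the branch of `T` at `y`
(the vertices whose path to `r` passes through `y`), in particular every edge inside `A`;
exchanging the leaf edge at `y` for `f` then adds `y` to `A`.

Making `y` a leaf is an induction on the size of its branch. By 2-connectivity an edge `wz` with
`w` in the branch and `z` outside avoids `y`. Making `w` a leaf first (its branch is smaller) and
then exchanging its leaf edge for `wz` moves `w` out of the branch at `y`.
-/

namespace Relation.ReflTransGen

variable {α : Type*} {r : α → α → Prop} {a b : α}

lemma exists_boundary_rel {p : α → Prop} (h : ReflTransGen r a b) (ha : p a) (hb : ¬ p b) :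
    ∃ c d, p c ∧ ¬ p d ∧ r c d := by
  induction h with
  | refl => exact absurd ha hb
  | @tail c d _ hcd ih =>
    by_cases hc : p c
    · exact ⟨c, d, hc, hb, hcd⟩
    · exact ih hc

lemma exists_seq (h : ReflTransGen r a b) :
    ∃ (k : ℕ) (x : ℕ → α), x 0 = a ∧ x k = b ∧ ∀ i < k, r (x i) (x (i + 1)) := by
  induction h with
  | refl => exact ⟨0, fun _ => a, rfl, rfl, by simp⟩
  | @tail c d _ hcd ih =>
    obtain ⟨k, x, hx0, hxk, hx⟩ := ih
    refine ⟨k + 1, fun i => if i ≤ k then x i else d, by simp [hx0], by simp, fun i hi => ?_⟩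
    rcases Nat.lt_succ_iff_lt_or_eq.1 hi with hik | rfl
    · simpa [hik.le, Nat.succ_le_of_lt hik] using hx i hik
    · simpa [hxk] using hcd

end Relation.ReflTransGen

namespace Multigraph

open Relation

variable {V E : Type} {G : Multigraph V E} {S S' T T' U : Finset E} {a b r u w x y : V}
  {e f g : E}

lemma ne_of_ends_eq (h : G.ends e = s(a, b)) : a ≠ b := fun hab =>
  G.loopless e (by rw [h, Sym2.mk_isDiag_iff]; exact hab)

lemma AdjOn.symm (h : G.AdjOn S a b) : G.AdjOn S b a := by
  obtain ⟨e, he, hab⟩ := h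
  exact ⟨e, he, hab.trans Sym2.eq_swap⟩

lemma ReachOn.symm (h : G.ReachOn S a b) : G.ReachOn S b a := by
  induction h with
  | refl => exact .refl
  | tail _ hcd ih => exact .head hcd.symm ih

lemma ReachOn.trans {c : V} (hab : G.ReachOn S a b) (hbc : G.ReachOn S b c) :
    G.ReachOn S a c :=
  ReflTransGen.trans hab hbc

lemma ReachOn.mono (hS : S ⊆ S') (h : G.ReachOn S a b) : G.ReachOn S' a b :=
  ReflTransGen.mono (fun _ _ ⟨e, he, hab⟩ => ⟨e, hS he, hab⟩) _ _ h

lemma reachOn_of_mem_ends (he : e ∈ S) (ha : a ∈ G.ends e) (hb : b ∈ G.ends e) :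
    G.ReachOn S a b := by
  obtain ⟨c, hac⟩ := Sym2.mem_iff_exists.1 ha
  rcases (Sym2.mem_iff.1 (hac ▸ hb)) with rfl | rfl
  · exact .refl
  · exact .single ⟨e, he, hac⟩

lemma ReachOn.mono_of_reachOn (h : G.ReachOn S a b)
    (hS : ∀ e ∈ S, (∀ x ∈ G.ends e, G.ReachOn S x b) → e ∈ S') : G.ReachOn S' a b := by
  induction h using ReflTransGen.head_induction_on with
  | refl => exact .refl
  | head hpq hqb ih =>
    obtain ⟨e, he, hpq⟩ := hpq
    refine .head ⟨e, hS e he fun x hx => ?_, hpq⟩ ih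
    exact (reachOn_of_mem_ends he hx (hpq ▸ Sym2.mem_mk_right _ _)).trans hqb

def edgesAvoiding (G : Multigraph V E) (S : Finset E) (x : V) : Finset E :=
  S.filter fun e => x ∉ G.ends e

@[simp]
lemma mem_edgesAvoiding : e ∈ G.edgesAvoiding S x ↔ e ∈ S ∧ x ∉ G.ends e :=
  mem_filter

lemma edgesAvoiding_mono (hS : S ⊆ S') : G.edgesAvoiding S x ⊆ G.edgesAvoiding S' x :=
  filter_subset_filter _ hS

lemma edgesAvoiding_subset_erase [DecidableEq E] (hx : x ∈ G.ends g) :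
    G.edgesAvoiding S x ⊆ S.erase g := by
  intro e he
  rw [mem_edgesAvoiding] at he
  exact mem_erase.2 ⟨fun h => he.2 (h ▸ hx), he.1⟩

lemma adjOnAvoid_eq_adjOn : G.AdjOnAvoid S x = G.AdjOn (G.edgesAvoiding S x) := by
  ext a b
  simp only [AdjOnAvoid, AdjOn, mem_edgesAvoiding]
  constructor
  · rintro ⟨⟨e, he, hab⟩, ha, hb⟩
    exact ⟨e, ⟨he, by simp [hab, Ne.symm ha, Ne.symm hb]⟩, hab⟩
  · rintro ⟨e, ⟨he, hx⟩, hab⟩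
    simp only [hab, Sym2.mem_iff, not_or] at hx
    exact ⟨⟨e, he, hab⟩, Ne.symm hx.1, Ne.symm hx.2⟩

lemma pathThrough_iff : G.PathThrough S r a x ↔ ¬ G.ReachOn (G.edgesAvoiding S x) a r := by
  rw [PathThrough, adjOnAvoid_eq_adjOn, ReachOn]

lemma ReachOn.edgesAvoiding (h : G.ReachOn S a b) (hx : ¬ G.ReachOn S x b) :
    G.ReachOn (G.edgesAvoiding S x) a b :=
  h.mono_of_reachOn fun _ he hb => mem_edgesAvoiding.2 ⟨he, fun hxe => hx (hb x hxe)⟩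

lemma eq_of_reachOn_edgesAvoiding (h : G.ReachOn (G.edgesAvoiding S x) a x) : a = x := by
  rcases h.cases_tail with rfl | ⟨c, -, _, he, hcx⟩
  · rfl
  · exact absurd (hcx ▸ Sym2.mem_mk_right c x) (mem_edgesAvoiding.1 he).2

lemma ReachOn.edgesAvoiding_or (h : G.ReachOn (G.edgesAvoiding S y) a b) (w : V) :
    G.ReachOn (G.edgesAvoiding S w) a b ∨ G.ReachOn (G.edgesAvoiding S y) w b := by
  induction h using ReflTransGen.head_induction_on with
  | refl => exact .inl .refl
  | head hpq hqb ih =>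
    obtain ⟨e, he, hpq⟩ := hpq
    rcases ih with hq | hw
    · by_cases hwe : w ∈ G.ends e
      · exact .inr ((reachOn_of_mem_ends he hwe (hpq ▸ Sym2.mem_mk_right _ _)).trans hqb)
      · rw [mem_edgesAvoiding] at he
        exact .inl (.head ⟨e, mem_edgesAvoiding.2 ⟨he.1, hwe⟩, hpq⟩ hq)
    · exact .inr hw

/-- Cut a walk from `y` to `b` at its last visit to `w`. -/
lemma ReachOn.edgesAvoiding_or_edgesAvoiding (h : G.ReachOn S y b) (hwy : w ≠ y) :
    G.ReachOn (G.edgesAvoiding S w) y b ∨ G.ReachOn (G.edgesAvoiding S y) w b := by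
  induction h with
  | refl => exact .inl .refl
  | @tail c d _ hcd ih =>
    obtain ⟨e, he, hcd⟩ := hcd
    by_cases hdw : d = w
    · exact .inr (hdw ▸ .refl)
    by_cases hdy : d = y
    · exact .inl (hdy ▸ .refl)
    have hstep {x : V} (hxc : x ≠ c) (hxd : x ≠ d) : G.AdjOn (G.edgesAvoiding S x) c d :=
      ⟨e, mem_edgesAvoiding.2 ⟨he, by simp [hcd, hxc, hxd]⟩, hcd⟩
    rcases ih with hyc | hwc
    · have hwc : w ≠ c := by
        rintro rfl
        exact hwy (eq_of_reachOn_edgesAvoiding hyc).symm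
      exact .inl (hyc.tail (hstep hwc (Ne.symm hdw)))
    · by_cases hyc : y = c
      · exact .inl (.single (hyc ▸ hstep (hyc ▸ hwy) (Ne.symm hdw)))
      · exact .inr (hwc.tail (hstep hyc (Ne.symm hdy)))

/-- Collapse `x` onto its only neighbour `u`. -/
lemma ReachOn.edgesAvoiding_of_pendant (h : G.ReachOn S a b) (hg : G.ends g = s(x, u))
    (hS : ∀ e ∈ S, x ∈ G.ends e → e = g) (ha : a ≠ x) (hb : b ≠ x) :
    G.ReachOn (G.edgesAvoiding S x) a b := by
  let φ : V → V := fun c => if c = x then u else c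
  have hux : u ≠ x := (ne_of_ends_eq hg).symm
  have hstep (c d : V) (hcd : G.AdjOn S c d) :
      ReflTransGen (G.AdjOn (G.edgesAvoiding S x)) (φ c) (φ d) := by
    obtain ⟨e, he, hcd⟩ := hcd
    by_cases hxe : x ∈ G.ends e
    · rw [hS e he hxe, hg] at hcd
      rcases Sym2.eq_iff.1 hcd with ⟨rfl, rfl⟩ | ⟨rfl, rfl⟩ <;>
        simpa [φ, hux] using ReflTransGen.refl
    · have hcx : c ≠ x := fun h => hxe (h ▸ hcd ▸ Sym2.mem_mk_left c d)
      have hdx : d ≠ x := fun h => hxe (h ▸ hcd ▸ Sym2.mem_mk_right c d)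
      simpa [φ, hcx, hdx] using ReflTransGen.single ⟨e, mem_edgesAvoiding.2 ⟨he, hxe⟩, hcd⟩
  simpa [φ, ha, hb, Function.onFun, ReachOn] using ReflTransGen.lift' φ hstep _ _ h

lemma isLeafVertex_iff [DecidableEq V] : G.IsLeafVertex T x ↔
    ∃ g ∈ T, x ∈ G.ends g ∧ ∀ e ∈ T, x ∈ G.ends e → e = g := by
  simp only [IsLeafVertex, treeDegree, card_eq_one, eq_singleton_iff_unique_mem, mem_filter]
  exact ⟨fun ⟨g, hg, hu⟩ => ⟨g, hg.1, hg.2, fun e he hx => hu e ⟨he, hx⟩⟩,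
    fun ⟨g, hg, hx, hu⟩ => ⟨g, ⟨hg, hx⟩, fun e he => hu e he.1 he.2⟩⟩

section Finite

variable [Fintype V]

lemma card_le_card_add_one_of_reachOn [Nonempty V] (hS : ∀ a b, G.ReachOn S a b) :
    Fintype.card V ≤ #S + 1 := by
  let H := SimpleGraph.fromEdgeSet (G.ends '' S)
  have hH : H.Connected := by
    refine (SimpleGraph.connected_iff_exists_forall_reachable H).2
      ⟨Classical.arbitrary V, fun b => ?_⟩
    refine (SimpleGraph.reachable_iff_reflTransGen _ _).2
      (ReflTransGen.mono (fun c d ⟨e, he, hcd⟩ => ?_) _ _ (hS _ b))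
    exact (SimpleGraph.fromEdgeSet_adj _).2 ⟨⟨e, he, hcd⟩, ne_of_ends_eq hcd⟩
  have hcard : Nat.card H.edgeSet ≤ #S := by
    rw [SimpleGraph.edgeSet_fromEdgeSet, Nat.card_coe_set_eq, ← Set.ncard_coe_finset S]
    exact (Set.ncard_le_ncard Set.sdiff_subset (S.finite_toSet.image _)).trans
      Set.ncard_image_le
  have := hH.card_vert_le_card_edgeSet_add_one
  rw [Nat.card_eq_fintype_card] at this
  omega

/-- Otherwise `T.erase e` would connect `V` with fewer than `#V - 1` edges. -/
lemma IsSpanningTree.not_reachOn_erase [DecidableEq E] (hT : G.IsSpanningTree T) (he : e ∈ T)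
    (hab : G.ends e = s(a, b)) : ¬ G.ReachOn (T.erase e) a b := by
  intro hr
  have : Nonempty V := ⟨a⟩
  have hconn : ∀ x y, G.ReachOn (T.erase e) x y := fun x y =>
    ReflTransGen.lift' id (fun c d ⟨f, hf, hcd⟩ => by
      by_cases hfe : f = e
      · rcases Sym2.eq_iff.1 (hcd.symm.trans (hfe ▸ hab)) with ⟨rfl, rfl⟩ | ⟨rfl, rfl⟩
        exacts [hr, hr.symm]
      · exact .single ⟨f, mem_erase.2 ⟨hfe, hf⟩, hcd⟩) _ _ (hT.1 x y)
  have hcard := card_le_card_add_one_of_reachOn hconn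
  rw [card_erase_of_mem he, Nat.sub_add_cancel (card_pos.2 ⟨e, he⟩), hT.2] at hcard
  have := Fintype.card_pos (α := V)
  omega

lemma IsSpanningTree.eq_of_reachOn_inter [DecidableEq E] (hT : G.IsSpanningTree T)
    (hT' : G.IsSpanningTree T') (h : ∀ z, G.ReachOn (T ∩ T') z r) : T = T' := by
  refine eq_of_subset_of_card_le (fun e he => ?_) (by rw [hT.2, hT'.2])
  by_contra heT'
  obtain ⟨⟨a, b⟩, hab⟩ := Quot.exists_rep (G.ends e)
  refine hT.not_reachOn_erase he hab.symm (((h a).trans (h b).symm).mono fun f hf => ?_)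
  rw [mem_inter] at hf
  exact mem_erase.2 ⟨fun hfe => heT' (hfe ▸ hf.2), hf.1⟩

def branch (G : Multigraph V E) (T : Finset E) (r y : V) : Finset V :=
  univ.filter fun z => G.PathThrough T r z y

lemma mem_branch {z : V} : z ∈ G.branch T r y ↔ ¬ G.ReachOn (G.edgesAvoiding T y) z r := by
  rw [branch, mem_filter, pathThrough_iff, and_iff_right (mem_univ z)]

lemma root_not_mem_branch : r ∉ G.branch T r y := fun h => mem_branch.1 h .refl

lemma self_mem_branch (hyr : y ≠ r) : y ∈ G.branch T r y :=
  mem_branch.2 fun h => hyr (eq_of_reachOn_edgesAvoiding h.symm).symm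

lemma branch_subset (hw : w ∈ G.branch T r y) : G.branch T r w ⊆ G.branch T r y := fun _ hz =>
  mem_branch.2 fun h => (h.edgesAvoiding_or w).elim (mem_branch.1 hz) (mem_branch.1 hw)

lemma branch_ssubset (hy : G.ReachOn T y r) (hyr : y ≠ r) (hw : w ∈ G.branch T r y)
    (hwy : w ≠ y) : G.branch T r w ⊂ G.branch T r y := by
  refine (ssubset_iff_of_subset (branch_subset hw)).2 ⟨y, self_mem_branch hyr, fun hy' => ?_⟩
  rcases hy.edgesAvoiding_or_edgesAvoiding hwy with h | h
  exacts [mem_branch.1 hy' h, mem_branch.1 hw h]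

lemma branch_insert_erase_ssubset [DecidableEq E] (hw : w ∈ G.branch T r y) (hwr : w ≠ r)
    (hkeep : ∀ e ∈ T, (∀ x ∈ G.ends e, x ∉ G.branch T r w) → e ∈ U)
    (hg : G.ends g = s(w, u)) (hUg : ∀ e ∈ U, w ∈ G.ends e → e = g) {z : V}
    (hwz : G.ends f = s(w, z)) (hz : z ∉ G.branch T r y) (hwy : w ≠ y) (hzy : z ≠ y) :
    G.branch (insert f (U.erase g)) r y ⊂ G.branch T r y := by
  have hout (v : V) (hv : v ∉ G.branch T r y) (hvw : v ≠ w) :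
      v ∉ G.branch (insert f (U.erase g)) r y := by
    rw [mem_branch, not_not] at hv ⊢
    have hU : G.ReachOn (G.edgesAvoiding U y) v r := hv.mono_of_reachOn fun e he hr => by
      rw [mem_edgesAvoiding] at he ⊢
      exact ⟨hkeep e he.1 fun x hx hxw => mem_branch.1 (branch_subset hw hxw) (hr x hx), he.2⟩
    refine (hU.edgesAvoiding_of_pendant hg (fun e he => hUg e (mem_edgesAvoiding.1 he).1)
      hvw hwr.symm).mono fun e he => ?_
    simp only [mem_edgesAvoiding] at he ⊢
    have hwg : w ∈ G.ends g := hg ▸ Sym2.mem_mk_left w u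
    exact ⟨mem_insert_of_mem (mem_erase.2 ⟨fun h => he.2 (h ▸ hwg), he.1.1⟩), he.1.2⟩
  have hw' : w ∉ G.branch (insert f (U.erase g)) r y := by
    have hz' := hout z hz fun h => hz (h ▸ hw)
    rw [mem_branch, not_not] at hz' ⊢
    refine .head ⟨f, mem_edgesAvoiding.2 ⟨mem_insert_self _ _, ?_⟩, hwz⟩ hz'
    simp [hwz, hwy.symm, hzy.symm]
  refine (ssubset_iff_of_subset fun v hv => ?_).2 ⟨w, hw, hw'⟩
  by_contra hv'
  exact hout v hv' (fun h => hw' (h ▸ hv)) hv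

variable [DecidableEq V] [DecidableEq E]

def LeafExchange (G : Multigraph V E) (T U : Finset E) : Prop :=
  G.IsSpanningTree U ∧ ∃ g f : E, G.IsLeafEdge T g ∧ f ∉ T ∧ U = insert f (T.erase g)

lemma IsSpanningTree.of_reflTransGen (hT : G.IsSpanningTree T)
    (h : ReflTransGen G.LeafExchange T U) : G.IsSpanningTree U := by
  rcases h.cases_tail with rfl | ⟨_, _, hU⟩
  exacts [hT, hU.1]

lemma IsSpanningTree.reflTransGen_insert_erase (hT : G.IsSpanningTree T)
    (hx : G.IsLeafVertex T x) (hg : g ∈ T) (hxg : x ∈ G.ends g) (hxf : x ∈ G.ends f) :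
    ReflTransGen G.LeafExchange T (insert f (T.erase g)) := by
  obtain ⟨g', -, -, hx'⟩ := isLeafVertex_iff.1 hx
  have hTg : ∀ e ∈ T, x ∈ G.ends e → e = g := fun e he hxe =>
    (hx' e he hxe).trans (hx' g hg hxg).symm
  by_cases hfg : f = g
  · rw [hfg, insert_erase hg]
  have hfT : f ∉ T := fun hf => hfg (hTg f hf hxf)
  obtain ⟨u, hu⟩ := Sym2.mem_iff_exists.1 hxg
  obtain ⟨v, hv⟩ := Sym2.mem_iff_exists.1 hxf
  have hvx : v ≠ x := (ne_of_ends_eq hv).symm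
  have hsub : G.edgesAvoiding T x ⊆ insert f (T.erase g) :=
    (edgesAvoiding_subset_erase hxg).trans (subset_insert _ _)
  have hreach : ∀ a, G.ReachOn (insert f (T.erase g)) a v := fun a => by
    by_cases hax : a = x
    · exact hax ▸ .single ⟨f, mem_insert_self _ _, hv⟩
    · exact ((hT.1 a v).edgesAvoiding_of_pendant hu hTg hax hvx).mono hsub
  refine .single ⟨⟨fun a b => (hreach a).trans (hreach b).symm, ?_⟩, g, f,
    ⟨hg, x, hxg, hx⟩, hfT, rfl⟩
  rw [card_insert_of_notMem fun h => hfT (mem_of_mem_erase h), card_erase_of_mem hg,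
    Nat.sub_add_cancel (card_pos.2 ⟨g, hg⟩), hT.2]

lemma IsSpanningTree.isLeafVertex_of_branch_subset (hT : G.IsSpanningTree T) (hyr : y ≠ r)
    (hy : G.branch T r y ⊆ {y}) : G.IsLeafVertex T y := by
  have hout {c : V} (hc : c ≠ y) : G.ReachOn (G.edgesAvoiding T y) c r :=
    not_not.1 fun h => hc (mem_singleton.1 (hy (mem_branch.2 h)))
  obtain ⟨c, ⟨e, he, hyc⟩, -⟩ := (hT.1 y r).cases_head.resolve_left hyr
  have hye : y ∈ G.ends e := hyc ▸ Sym2.mem_mk_left y c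
  refine isLeafVertex_iff.2 ⟨e, he, hye, fun e' he' hye' => ?_⟩
  by_contra hne
  obtain ⟨c', hyc'⟩ := Sym2.mem_iff_exists.1 hye'
  refine hT.not_reachOn_erase he hyc (.head ⟨e', mem_erase.2 ⟨hne, he'⟩, hyc'⟩ ?_)
  exact ((hout (ne_of_ends_eq hyc').symm).trans (hout (ne_of_ends_eq hyc).symm).symm).mono
    (edgesAvoiding_subset_erase hye)

theorem IsSpanningTree.exists_reflTransGen_isLeafVertex (h2 : G.TwoConnected)
    (hT : G.IsSpanningTree T) (hyr : y ≠ r) :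
    ∃ U, ReflTransGen G.LeafExchange T U ∧ G.IsLeafVertex U y ∧
      ∀ e ∈ T, (∀ x ∈ G.ends e, x ∉ G.branch T r y) → e ∈ U := by
  induction hn : #(G.branch T r y) using Nat.strong_induction_on generalizing T y with
  | _ n ih =>
  by_cases hbase : G.branch T r y ⊆ {y}
  · exact ⟨T, .refl, hT.isLeafVertex_of_branch_subset hyr hbase, fun e he _ => he⟩
  obtain ⟨w₀, hw₀, hw₀y⟩ := not_subset.1 hbase
  -- a path from `w₀` to `r` avoiding `y` leaves the branch at `y` through an edge `f = wz`
  obtain ⟨w, z, hw, hz, ⟨f, hwz⟩, hwy, hzy⟩ :=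
    (h2.2 y w₀ r (by simpa using hw₀y) hyr.symm).exists_boundary_rel hw₀ root_not_mem_branch
  have hwr : w ≠ r := fun h => root_not_mem_branch (h ▸ hw)
  obtain ⟨T₁, hTT₁, hleaf, hkeep⟩ :=
    ih _ (hn ▸ card_lt_card (branch_ssubset (hT.1 y r) hyr hw hwy)) hT hwr rfl
  obtain ⟨g, hg, hwg, hT₁g⟩ := isLeafVertex_iff.1 hleaf
  obtain ⟨u, hu⟩ := Sym2.mem_iff_exists.1 hwg
  have hT₁T₂ := (hT.of_reflTransGen hTT₁).reflTransGen_insert_erase hleaf hg hwg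
    (hwz ▸ Sym2.mem_mk_left w z)
  have hs := branch_insert_erase_ssubset hw hwr hkeep hu hT₁g hwz hz hwy hzy
  obtain ⟨T₃, hT₂T₃, hleaf', hkeep'⟩ :=
    ih _ (hn ▸ card_lt_card hs) (hT.of_reflTransGen (hTT₁.trans hT₁T₂)) hyr rfl
  refine ⟨T₃, hTT₁.trans (hT₁T₂.trans hT₂T₃), hleaf', fun e he he' => hkeep' e ?_
    fun x hx hx' => he' x hx (hs.subset hx')⟩
  have heT₁ := hkeep e he fun x hx hxw => he' x hx (branch_subset hw hxw)
  exact mem_insert_of_mem (mem_erase.2 ⟨fun h => he' w (h ▸ hwg) hw, heT₁⟩)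

theorem IsSpanningTree.reflTransGen_leafExchange (h2 : G.TwoConnected)
    (hT : G.IsSpanningTree T) (hT' : G.IsSpanningTree T') : ReflTransGen G.LeafExchange T T' := by
  rcases isEmpty_or_nonempty V with hV | hV
  · have h0 {S : Finset E} (hS : G.IsSpanningTree S) : S = ∅ := card_eq_zero.1 (by simp [hS.2])
    rw [h0 hT, h0 hT']
  obtain ⟨r⟩ := hV
  induction hn : #{z | ¬ G.ReachOn (T ∩ T') z r} using Nat.strong_induction_on
    generalizing T with
  | _ n ih =>
  by_cases hA : ∀ z, G.ReachOn (T ∩ T') z r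
  · rw [hT.eq_of_reachOn_inter hT' hA]
  obtain ⟨z₀, hz₀⟩ := not_forall.1 hA
  obtain ⟨y, w, hy, hw, f, hfT', hyw⟩ := (hT'.1 z₀ r).exists_boundary_rel
    (p := fun z => ¬ G.ReachOn (T ∩ T') z r) hz₀ (not_not.2 .refl)
  rw [not_not] at hw
  have hyr : y ≠ r := fun h => hy (h ▸ .refl)
  obtain ⟨T₁, hTT₁, hleaf, hkeep⟩ := hT.exists_reflTransGen_isLeafVertex (r := r) h2 hyr
  obtain ⟨g, hg, hyg, -⟩ := isLeafVertex_iff.1 hleaf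
  have hT₁T₂ := (hT.of_reflTransGen hTT₁).reflTransGen_insert_erase hleaf hg hyg
    (hyw ▸ Sym2.mem_mk_left y w)
  set T₂ := insert f (T₁.erase g)
  have hA₂ (v : V) (hv : G.ReachOn (T ∩ T') v r) : G.ReachOn (T₂ ∩ T') v r :=
    (hv.edgesAvoiding hy).mono_of_reachOn fun e he hr => by
      rw [mem_edgesAvoiding, mem_inter] at he
      have heT₁ := hkeep e he.1.1 fun x hx =>
        mem_branch.not.2 (not_not.2 ((hr x hx).mono (edgesAvoiding_mono inter_subset_left)))
      exact mem_inter.2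
        ⟨mem_insert_of_mem (mem_erase.2 ⟨fun h => he.2 (h ▸ hyg), heT₁⟩), he.1.2⟩
  have hy₂ : G.ReachOn (T₂ ∩ T') y r :=
    .head ⟨f, mem_inter.2 ⟨mem_insert_self _ _, hfT'⟩, hyw⟩ (hA₂ w hw)
  have hlt : #{z | ¬ G.ReachOn (T₂ ∩ T') z r} < n := by
    refine hn ▸ card_lt_card ((ssubset_iff_of_subset fun z hz => ?_).2 ⟨y, ?_, ?_⟩)
    · simp only [mem_filter, mem_univ, true_and] at hz ⊢
      exact fun h => hz (hA₂ z h)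
    · simpa using hy
    · simpa using hy₂
  exact hTT₁.trans (hT₁T₂.trans (ih _ hlt (hT.of_reflTransGen (hTT₁.trans hT₁T₂)) rfl))

end Finite

end Multigraph

theorem leaf_edge_exchange_connectivity_general
    {V E : Type} [Fintype V] [DecidableEq V] [DecidableEq E]
    (G : Multigraph V E) (h2 : G.TwoConnected)
    (Tstart Tgoal : Finset E)
    (hstart : G.IsSpanningTree Tstart) (hgoal : G.IsSpanningTree Tgoal) :
    ∃ (k : ℕ) (Ts : ℕ → Finset E), Ts 0 = Tstart ∧ Ts k = Tgoal ∧
      ∀ i, i < k → G.IsSpanningTree (Ts (i + 1)) ∧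
        ∃ g f : E, G.IsLeafEdge (Ts i) g ∧ f ∉ Ts i ∧
          Ts (i + 1) = insert f ((Ts i).erase g) :=
  (hstart.reflTransGen_leafExchange h2 hgoal).exists_seq

/-- In a 2-connected multigraph, any spanning tree can be
transformed into any other by repeatedly removing a leaf edge and adding a
non-tree edge. -/
theorem leaf_edge_exchange_connectivity
    {V E : Type} [Fintype V] [Fintype E] [DecidableEq V] [DecidableEq E]
    (G : Multigraph V E) (h2 : G.TwoConnected)
    (Tstart Tgoal : Finset E)
    (hstart : G.IsSpanningTree Tstart) (hgoal : G.IsSpanningTree Tgoal) :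
    ∃ (k : ℕ) (Ts : ℕ → Finset E), Ts 0 = Tstart ∧ Ts k = Tgoal ∧
      ∀ i, i < k → G.IsSpanningTree (Ts (i + 1)) ∧
        ∃ g f : E, G.IsLeafEdge (Ts i) g ∧ f ∉ Ts i ∧
          Ts (i + 1) = insert f ((Ts i).erase g) :=
  leaf_edge_exchange_connectivity_general G h2 Tstart Tgoal hstart hgoal

end
end

section
/- Let G be a 2-connected multigraph having a vertex s of degree at least 3, and let c be any other vertex. Then 2(c - s) is not firing equivalent to the zero divisor; equivalently, the class of c - s in the sandpile group Pic^0(G) does not have order dividing 2. -/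
open Finset

noncomputable section
open scoped Classical

/-!
Suppose `Δf = 2(c - s)` for an integer potential `f`, where `(Δf)(w) = ∑ (f w - f u)` over the
edges `wu` at `w`. At a vertex `w` where `f` attains its minimum `m`, every term is `≤ 0`, and by
integrality `≤ -1` on each edge leaving the level set `{f = m}`. Since `Δf ≥ 0` away from `s`,
the level set is closed under walks avoiding `s`, and it does not contain `c` because
`(Δf)(c) = 2 > 0`; by 2-connectivity it must therefore contain `s`. But `(Δf)(s) = -2` lets at
most two edges at `s` leave the level set, so a third edge at `s` leads to some `u ≠ s` with
`f u = m`, and a walk from `u` to `c` avoiding `s` puts `c` into the level set after all.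
-/

def edgeFlow {V : Type} [DecidableEq V] (f : V → ℤ) (w : V) : Sym2 V → ℤ :=
  Sym2.lift ⟨fun x y => (if w = x then f x - f y else 0) + (if w = y then f y - f x else 0),
    fun _ _ => add_comm _ _⟩

lemma edgeFlow_eq {V : Type} [Fintype V] [DecidableEq V] (f : V → ℤ) (w : V) {z : Sym2 V}
    (hz : ¬ z.IsDiag) :
    edgeFlow f w z = (if w ∈ z then f w else 0) - ∑ v, if z = s(v, w) then f v else 0 := by
  induction z using Sym2.ind with
  | h x y =>
    rw [Sym2.mk_isDiag_iff] at hz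
    by_cases hx : w = x
    · subst hx
      simp [edgeFlow, hz, Ne.symm hz, Sym2.eq_swap]
    · by_cases hy : w = y
      · subst hy
        simp [edgeFlow, hz, Ne.symm hz]
      · simp [edgeFlow, hx, hy, Ne.symm hx, Ne.symm hy]

lemma edgeFlow_le_of_forall_le {V : Type} [DecidableEq V] {f : V → ℤ} {w : V}
    (hw : ∀ v, f w ≤ f v) (z : Sym2 V) :
    edgeFlow f w z ≤ -(if w ∈ z ∧ ∃ u ∈ z, f w < f u then 1 else 0) := by
  induction z using Sym2.ind with
  | h x y =>
    have := hw x
    have := hw y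
    simp only [edgeFlow, Sym2.lift_mk, Sym2.mem_iff, exists_eq_or_imp, exists_eq_left]
    split_ifs <;> grind

namespace Multigraph

variable {V E : Type} [Fintype E] [DecidableEq V] (G : Multigraph V E)

lemma lapRow_apply (v w : V) :
    G.lapRow v w = (if v = w then (G.degree w : ℤ) else 0)
      - (univ.filter fun e => G.ends e = s(v, w)).card := by
  rcases eq_or_ne v w with rfl | hvw
  · have : univ.filter (fun e => G.ends e = s(v, v)) = ∅ :=
      filter_false_of_mem fun e _ he => G.loopless e (he ▸ Sym2.mk_isDiag_iff.mpr rfl)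
    simp [lapRow, this]
  · simp [lapRow, hvw, hvw.symm]

variable [Fintype V]

def lap (f : V → ℤ) : V → ℤ := ∑ v, f v • G.lapRow v

lemma firingEquiv_zero_iff (D : V → ℤ) : G.FiringEquiv D 0 ↔ ∃ f, G.lap f = D := by
  rw [FiringEquiv, sub_zero, LapSubgroup, ← Submodule.span_int_eq_addSubgroupClosure,
    Submodule.mem_toAddSubgroup, Submodule.mem_span_range_iff_exists_fun]
  rfl

lemma lap_apply (f : V → ℤ) (w : V) : G.lap f w = ∑ e, edgeFlow f w (G.ends e) := by
  simp_rw [edgeFlow_eq f w (G.loopless _), sum_sub_distrib]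
  calc G.lap f w = ∑ v, f v * G.lapRow v w := by simp [lap, Finset.sum_apply]
    _ = f w * G.degree w - ∑ v, f v * (univ.filter fun e => G.ends e = s(v, w)).card := by
      simp [lapRow_apply, mul_sub, sum_sub_distrib, mul_ite]
    _ = _ := by
      congr 1
      · rw [← sum_filter, sum_const, nsmul_eq_mul, degree, mul_comm]
      · rw [sum_comm]
        refine sum_congr rfl fun v _ => ?_
        rw [← sum_filter, sum_const, nsmul_eq_mul, mul_comm]

section Minimum

variable {G} {f : V → ℤ} {w : V}

lemma lap_add_card_le_zero_of_forall_le (hw : ∀ v, f w ≤ f v) :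
    G.lap f w + (univ.filter fun e => w ∈ G.ends e ∧ ∃ u ∈ G.ends e, f w < f u).card ≤ 0 := by
  rw [lap_apply, card_filter, Nat.cast_sum, ← sum_add_distrib]
  refine sum_nonpos fun e _ => ?_
  have := edgeFlow_le_of_forall_le hw (G.ends e)
  push_cast
  split_ifs at this ⊢ <;> omega

lemma lap_nonpos_of_forall_le (hw : ∀ v, f w ≤ f v) : G.lap f w ≤ 0 := by
  linarith [G.lap_add_card_le_zero_of_forall_le hw]

lemma eq_of_mem_ends_of_forall_le (hw : ∀ v, f w ≤ f v) (hlap : 0 ≤ G.lap f w) {e : E}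
    (hwe : w ∈ G.ends e) {u : V} (hue : u ∈ G.ends e) : f u = f w := by
  have hcard := G.lap_add_card_le_zero_of_forall_le hw
  have hempty : univ.filter (fun e => w ∈ G.ends e ∧ ∃ u ∈ G.ends e, f w < f u) = ∅ := by
    rw [← card_eq_zero]
    omega
  have := filter_eq_empty_iff.mp hempty (mem_univ e)
  push Not at this
  exact le_antisymm (this hwe u hue) (hw u)

lemma exists_adj_eq_of_forall_le (hw : ∀ v, f w ≤ f v) (hlap : 0 < G.lap f w + G.degree w) :
    ∃ u, u ≠ w ∧ G.Adj w u ∧ f u = f w := by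
  have hcard := G.lap_add_card_le_zero_of_forall_le hw
  obtain ⟨e, hwe, hflat⟩ : ∃ e, w ∈ G.ends e ∧ ¬ ∃ u ∈ G.ends e, f w < f u := by
    by_contra! h
    have : univ.filter (fun e => w ∈ G.ends e)
        ⊆ univ.filter (fun e => w ∈ G.ends e ∧ ∃ u ∈ G.ends e, f w < f u) :=
      fun e he => mem_filter.mpr ⟨mem_univ e, (mem_filter.mp he).2, h e (mem_filter.mp he).2⟩
    have := card_le_card this
    rw [degree] at hlap
    omega
  push Not at hflat
  refine ⟨Sym2.Mem.other hwe, Sym2.other_ne (G.loopless e) hwe, ⟨e, (Sym2.other_spec hwe).symm⟩,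
    le_antisymm (hflat _ (Sym2.other_mem hwe)) (hw _)⟩

lemma eq_of_reflTransGen_adjAvoid {s a b : V} (hmin : ∀ v, f a ≤ f v)
    (hlap : ∀ v, v ≠ s → 0 ≤ G.lap f v) (hab : Relation.ReflTransGen (G.AdjAvoid s) a b) :
    f b = f a := by
  induction hab with
  | refl => rfl
  | tail _ hstep ih =>
    obtain ⟨⟨e, he⟩, hs, -⟩ := hstep
    have hmin' : ∀ v, f _ ≤ f v := ih ▸ hmin
    rw [← ih]
    exact G.eq_of_mem_ends_of_forall_le hmin' (hlap _ hs) (he ▸ Sym2.mem_mk_left _ _)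
      (he ▸ Sym2.mem_mk_right _ _)

end Minimum

end Multigraph

theorem two_smul_chipDiv_ne_zero_general
    {V E : Type} [Fintype V] [Fintype E] [DecidableEq V]
    (G : Multigraph V E) (h2 : G.TwoConnected)
    (s c : V) (hdeg : 3 ≤ G.degree s) (hcs : c ≠ s) :
    ¬ G.FiringEquiv (2 • chipDiv c s) 0 := by
  rw [G.firingEquiv_zero_iff]
  rintro ⟨f, hf⟩
  have hlap : ∀ w, G.lap f w = 2 * ((if w = c then 1 else 0) - (if w = s then 1 else 0)) := by
    simp [hf, chipDiv]
  have : Nonempty V := ⟨s⟩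
  obtain ⟨v₀, hv₀⟩ := Finite.exists_min f
  have hsuper : ∀ v, v ≠ s → 0 ≤ G.lap f v := fun v hv => by
    rw [hlap, if_neg hv]
    split_ifs <;> norm_num
  have hc : f c ≠ f v₀ := fun h => by
    have := G.lap_nonpos_of_forall_le (h ▸ hv₀)
    simp [hlap, hcs] at this
  have hs : f s = f v₀ := by
    by_contra hs
    exact hc (G.eq_of_reflTransGen_adjAvoid hv₀ hsuper
      (h2.2 s v₀ c (fun h => hs (h ▸ rfl)) hcs))
  obtain ⟨u, hus, -, hu⟩ := G.exists_adj_eq_of_forall_le (f := f) (hs ▸ hv₀) (by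
    rw [hlap, if_neg hcs.symm, if_pos rfl]
    omega)
  have hu' : ∀ v, f u ≤ f v := (hu.trans hs) ▸ hv₀
  exact hc ((G.eq_of_reflTransGen_adjAvoid hu' hsuper (h2.2 s u c hus hcs)).trans (hu.trans hs))

/-- In a 2-connected multigraph with a vertex `s` of degree at
least 3, for any other vertex `c` the divisor `2(c - s)` is not firing
equivalent to zero; i.e. `[c - s]` does not have order dividing 2 in the
sandpile group. -/
theorem two_smul_chipDiv_ne_zero
    {V E : Type} [Fintype V] [Fintype E] [DecidableEq V] [DecidableEq E]
    (G : Multigraph V E) (h2 : G.TwoConnected)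
    (s c : V) (hdeg : 3 ≤ G.degree s) (hcs : c ≠ s) :
    ¬ G.FiringEquiv (2 • chipDiv c s) 0 :=
  two_smul_chipDiv_ne_zero_general G h2 s c hdeg hcs
end
end

section
/- Let G be a 2-connected ribbon graph, T a spanning tree, c a vertex, g an edge of T with endpoints c and x, and f = χ(c,g) an edge with endpoints c and s, where f is not in T. Then applying one step of rotor rotation at c to T_s (replacing g by f) yields an acyclic rotor configuration (i.e., T \ g ∪ f is a spanning tree) if and only if the path in T from c to s passes through x. -/
open Finset

noncomputable section
open scoped Classical

/-!
Deleting the tree edge `g = cx` splits `T` into two components, one around `c` and one around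
`x`, and the component of `c` consists of the vertices that `c` reaches in `T` without passing
through `x`. Adding `f = cs` reconnects the two halves precisely when `s` lies on the side of `x`,
i.e. when the tree path from `c` to `s` passes through `x`. Otherwise `T - g + f` has `|V| - 1`
edges but is disconnected, which is impossible since a connected edge set has at least
`|V| - 1` edges.
-/

namespace Multigraph

variable {V E : Type} (G : Multigraph V E)

lemma adjOn_symm {S : Finset E} {a b : V} (h : G.AdjOn S a b) : G.AdjOn S b a := by
  obtain ⟨e, he, hends⟩ := h
  exact ⟨e, he, hends.trans Sym2.eq_swap⟩

lemma reachOn_symm {S : Finset E} {a b : V} (h : G.ReachOn S a b) : G.ReachOn S b a :=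
  have : Std.Symm (G.AdjOn S) := ⟨fun _ _ => G.adjOn_symm⟩
  Relation.ReflTransGen.stdSymm.symm _ _ h

lemma reachOn_mono {S S' : Finset E} (hSS : S ⊆ S') {a b : V} (h : G.ReachOn S a b) :
    G.ReachOn S' a b :=
  Relation.ReflTransGen.mono (fun _ _ ⟨e, he, hends⟩ => ⟨e, hSS he, hends⟩) _ _ h

lemma reachOn_of_forall_reachOn {S : Finset E} {c : V} (h : ∀ v, G.ReachOn S v c) (u v : V) :
    G.ReachOn S u v :=
  (h u).trans (G.reachOn_symm (h v))

def simpleGraphOn (S : Finset E) : SimpleGraph V where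
  Adj := G.AdjOn S
  symm := ⟨fun _ _ => G.adjOn_symm⟩
  loopless := ⟨fun _ ⟨e, _, hends⟩ => G.loopless e (hends ▸ Sym2.mk_isDiag_iff.2 rfl)⟩

lemma card_edgeSet_simpleGraphOn_le (S : Finset E) :
    Nat.card (G.simpleGraphOn S).edgeSet ≤ S.card := by
  have hsub : (G.simpleGraphOn S).edgeSet ⊆ ↑(S.image G.ends) := by
    intro z hz
    induction z using Sym2.ind with
    | h a b =>
      obtain ⟨e, he, hends⟩ := hz
      exact mem_coe.2 (mem_image.2 ⟨e, he, hends⟩)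
  calc Nat.card (G.simpleGraphOn S).edgeSet
      ≤ (↑(S.image G.ends) : Set (Sym2 V)).ncard :=
        Set.ncard_le_ncard hsub (finite_toSet _)
    _ = (S.image G.ends).card := Set.ncard_coe_finset _
    _ ≤ S.card := card_image_le

lemma card_le_card_add_one_of_reachOn_s10 [Fintype V] {S : Finset E} (h : ∀ u v, G.ReachOn S u v) :
    Fintype.card V ≤ S.card + 1 := by
  cases isEmpty_or_nonempty V
  · simp
  have hconn : (G.simpleGraphOn S).Connected :=
    (SimpleGraph.connected_iff _).2
      ⟨fun u v => (SimpleGraph.reachable_iff_reflTransGen u v).2 (h u v), ‹_›⟩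
  have hcard := hconn.card_vert_le_card_edgeSet_add_one
  rw [Nat.card_eq_fintype_card] at hcard
  have := G.card_edgeSet_simpleGraphOn_le S
  omega

lemma not_forall_reachOn_erase_of_isSpanningTree [Fintype V] [DecidableEq E] {T : Finset E}
    (hT : G.IsSpanningTree T) {g : E} (hg : g ∈ T) : ¬ ∀ u v, G.ReachOn (T.erase g) u v := by
  intro h
  have hcard := G.card_le_card_add_one_of_reachOn_s10 h
  have hpos : 0 < T.card := card_pos.2 ⟨g, hg⟩
  rw [card_erase_of_mem hg] at hcard
  have := hT.2
  omega

lemma reachOn_erase_or_reachOn_erase [DecidableEq E] {S : Finset E} {g : E} {c x : V}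
    (hge : G.ends g = s(c, x)) {v : V} (h : G.ReachOn S v c) :
    G.ReachOn (S.erase g) v c ∨ G.ReachOn (S.erase g) v x := by
  induction h using Relation.ReflTransGen.head_induction_on with
  | refl => exact Or.inl .refl
  | head step _ ih =>
    obtain ⟨e, he, hends⟩ := step
    by_cases heg : e = g
    · subst heg
      rcases Sym2.eq_iff.1 (hge.symm.trans hends) with ⟨rfl, -⟩ | ⟨-, rfl⟩
      · exact Or.inl .refl
      · exact Or.inr .refl
    · have hstep : G.AdjOn (S.erase g) _ _ := ⟨e, mem_erase.2 ⟨heg, he⟩, hends⟩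
      exact ih.imp (.head hstep) (.head hstep)

lemma not_reachOn_erase_of_isSpanningTree [Fintype V] [DecidableEq E] {T : Finset E}
    (hT : G.IsSpanningTree T) {g : E} (hg : g ∈ T) {c x : V} (hge : G.ends g = s(c, x)) :
    ¬ G.ReachOn (T.erase g) c x := by
  intro hcx
  refine G.not_forall_reachOn_erase_of_isSpanningTree hT hg
    (G.reachOn_of_forall_reachOn (c := c) fun v => ?_)
  exact (G.reachOn_erase_or_reachOn_erase hge (hT.1 v c)).elim id
    (·.trans (G.reachOn_symm hcx))

lemma reachOn_erase_of_reachOn_avoid [DecidableEq E] {T : Finset E} {g : E} {x : V}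
    (hxg : x ∈ G.ends g) {a b : V} (h : Relation.ReflTransGen (G.AdjOnAvoid T x) a b) :
    G.ReachOn (T.erase g) a b := by
  refine Relation.ReflTransGen.mono ?_ _ _ h
  rintro u w ⟨⟨e, he, hends⟩, hux, hwx⟩
  refine ⟨e, mem_erase.2 ⟨?_, he⟩, hends⟩
  rintro rfl
  rw [hends, Sym2.mem_iff] at hxg
  rcases hxg with rfl | rfl
  · exact hux rfl
  · exact hwx rfl

lemma reachOn_avoid_of_reachOn {S T : Finset E} (hST : S ⊆ T) {a x w : V}
    (hax : ¬ G.ReachOn S a x) (h : G.ReachOn S a w) :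
    Relation.ReflTransGen (G.AdjOnAvoid T x) a w := by
  induction h with
  | refl => exact .refl
  | @tail u w hau step ih =>
    obtain ⟨e, he, hends⟩ := step
    refine ih.tail ⟨⟨e, hST he, hends⟩, ?_, ?_⟩
    · rintro rfl
      exact hax hau
    · rintro rfl
      exact hax (hau.tail ⟨e, he, hends⟩)

lemma pathThrough_iff_not_reachOn_erase [Fintype V] [DecidableEq E] {T : Finset E}
    (hT : G.IsSpanningTree T) {g : E} (hg : g ∈ T) {c x s : V} (hge : G.ends g = s(c, x)) :
    G.PathThrough T s c x ↔ ¬ G.ReachOn (T.erase g) c s :=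
  not_congr ⟨G.reachOn_erase_of_reachOn_avoid (hge ▸ Sym2.mem_mk_right c x),
    G.reachOn_avoid_of_reachOn (T.erase_subset g)
      (G.not_reachOn_erase_of_isSpanningTree hT hg hge)⟩

lemma reachOn_of_reachOn_insert [DecidableEq E] {S : Finset E} {f : E} {c s : V}
    (hfe : G.ends f = s(c, s)) (hcs : G.ReachOn S c s) {u v : V}
    (h : G.ReachOn (insert f S) u v) : G.ReachOn S u v := by
  induction h with
  | refl => exact .refl
  | tail _ step ih =>
    obtain ⟨e, he, hends⟩ := step
    refine ih.trans ?_
    rcases mem_insert.1 he with rfl | he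
    · rcases Sym2.eq_iff.1 (hfe.symm.trans hends) with ⟨rfl, rfl⟩ | ⟨rfl, rfl⟩
      · exact hcs
      · exact G.reachOn_symm hcs
    · exact .single ⟨e, he, hends⟩

lemma isSpanningTree_insert_erase_iff [Fintype V] [DecidableEq E] {T : Finset E}
    (hT : G.IsSpanningTree T) {g f : E} (hg : g ∈ T) (hfT : f ∉ T) {c x s : V}
    (hge : G.ends g = s(c, x)) (hfe : G.ends f = s(c, s)) :
    G.IsSpanningTree (insert f (T.erase g)) ↔ ¬ G.ReachOn (T.erase g) c s := by
  have hsplit (v : V) : G.ReachOn (T.erase g) v c ∨ G.ReachOn (T.erase g) v x :=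
    G.reachOn_erase_or_reachOn_erase hge (hT.1 v c)
  constructor
  · rintro hsp hcs
    exact G.not_forall_reachOn_erase_of_isSpanningTree hT hg
      fun u v => G.reachOn_of_reachOn_insert hfe hcs (hsp.1 u v)
  · intro hcs
    have hsx : G.ReachOn (T.erase g) s x := (hsplit s).resolve_left (hcs ∘ G.reachOn_symm)
    have hsub : T.erase g ⊆ insert f (T.erase g) := subset_insert f _
    have hxc : G.ReachOn (insert f (T.erase g)) x c :=
      (G.reachOn_mono hsub (G.reachOn_symm hsx)).tail
        ⟨f, mem_insert_self _ _, hfe.trans Sym2.eq_swap⟩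
    refine ⟨G.reachOn_of_forall_reachOn (c := c) fun v => ?_, ?_⟩
    · rcases hsplit v with h | h
      · exact G.reachOn_mono hsub h
      · exact (G.reachOn_mono hsub h).trans hxc
    · have hpos : 0 < T.card := card_pos.2 ⟨g, hg⟩
      have := hT.2
      rw [card_insert_of_notMem fun h => hfT (mem_of_mem_erase h), card_erase_of_mem hg]
      omega

end Multigraph

theorem single_step_criterion_general
    {V E : Type} [Fintype V] [DecidableEq E]
    (G : Multigraph V E) (T : Finset E) (hT : G.IsSpanningTree T)
    (c x s : V) (g f : E) (hg : g ∈ T) (hge : G.ends g = s(c, x))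
    (hfe : G.ends f = s(c, s)) (hfT : f ∉ T) :
    G.IsSpanningTree (insert f (T.erase g)) ↔ G.PathThrough T s c x := by
  rw [G.isSpanningTree_insert_erase_iff hT hg hfT hge hfe,
    G.pathThrough_iff_not_reachOn_erase hT hg hge]

/-- On a 2-connected ribbon graph, for a tree edge `g` with
endpoints `c, x` whose successor `f = χ(c,g)` has endpoints `c, s` and lies
outside `T`, the one-step rotation at `c` yields an acyclic configuration
(i.e. `T \ g ∪ f` is a spanning tree) iff the path in `T` from `c` to `s`
passes through `x`. -/
theorem single_step_criterion
    {V E : Type} [Fintype V] [Fintype E] [DecidableEq V] [DecidableEq E]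
    (G : Multigraph V E) (χ : RibbonStruct V E) (hrib : χ.IsRibbon G)
    (h2 : G.TwoConnected) (T : Finset E) (hT : G.IsSpanningTree T)
    (c x s : V) (g f : E) (hg : g ∈ T) (hge : G.ends g = s(c, x))
    (hnext : χ.next c g = f) (hfe : G.ends f = s(c, s)) (hfT : f ∉ T) :
    G.IsSpanningTree (insert f (T.erase g)) ↔ G.PathThrough T s c x :=
  single_step_criterion_general G T hT c x s g f hg hge hfe hfT
end
end

section
/- Let G be a 2-connected ribbon graph with root r, let T be a spanning tree, and suppose T_r is rotatable at a vertex c from edge g to edge f (meaning g = T_r⟨c⟩, f = χ(c,g), and replacing the rotor at c by f yields an acyclic configuration). Then: (1) for any edge e not in T and distinct from f, T_r remains rotatable at c from g to f in the deletion G\e; (2) for any edge e of T distinct from g, the configuration (T\e)_r is rotatable at c from g to f in the contraction G/e. -/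
open Finset

noncomputable section
open scoped Classical

/-- Deletion of the edge `e` from a multigraph. -/
def Multigraph.delete {V E : Type} (G : Multigraph V E) (e : E) :
    Multigraph V {e' : E // e' ≠ e} :=
  ⟨fun e' => G.ends e'.1, fun e' => G.loopless e'.1⟩

/-- Starting from `a`, the next iterate of the cyclic order at `v` that does
not lie in the set `S` (skipping over the edges in `S`). -/
def skipNext {V E : Type} (χ : RibbonStruct V E) (v : V) (S : Set E) (a : E) : E :=
  if h : ∃ n : ℕ, 0 < n ∧ (χ.next v)^[n] a ∉ S then (χ.next v)^[Nat.find h] a else a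

/-- The induced ribbon structure on a deletion: at each vertex, skip the
deleted edge in the cyclic order. -/
def RibbonStruct.delete {V E : Type} [DecidableEq E] (χ : RibbonStruct V E) (e : E) :
    RibbonStruct V {e' : E // e' ≠ e} :=
  ⟨fun v a => if h : skipNext χ v {e} a.1 = e then a else ⟨skipNext χ v {e} a.1, h⟩⟩

/-- Identify `y` with `x`. -/
def contractFun {V : Type} [DecidableEq V] (x y : V) (hxy : x ≠ y) :
    V → {v : V // v ≠ y} :=
  fun v => if h : v = y then ⟨x, hxy⟩ else ⟨v, h⟩

private lemma contract_aux {V : Type} [DecidableEq V] {x y : V} (hxy : x ≠ y)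
    (a b : V) (hab : a ≠ b) (hne : s(a, b) ≠ s(x, y)) :
    ¬ (Sym2.map (contractFun x y hxy) s(a, b)).IsDiag := by
  intro hd
  rw [Sym2.map_pair_eq, Sym2.mk_isDiag_iff] at hd
  unfold contractFun at hd
  by_cases ha : a = y <;> by_cases hb : b = y
  · exact hab (ha.trans hb.symm)
  · rw [dif_pos ha, dif_neg hb] at hd
    have hxb : x = b := congrArg Subtype.val hd
    exact hne (by rw [ha, ← hxb]; exact Sym2.eq_swap)
  · rw [dif_neg ha, dif_pos hb] at hd
    have hax : a = x := congrArg Subtype.val hd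
    exact hne (by rw [hb, hax])
  · rw [dif_neg ha, dif_neg hb] at hd
    exact hab (congrArg Subtype.val hd)

/-- Contraction of the edge `e` (with endpoints `x`, `y`): identify `y` with
`x` and discard `e` together with all the edges parallel to it (which would
become loops). -/
def Multigraph.contract {V E : Type} [DecidableEq V] (G : Multigraph V E)
    (e : E) (x y : V) (h : G.ends e = s(x, y)) :
    Multigraph {v : V // v ≠ y} {e' : E // G.ends e' ≠ G.ends e} where
  ends := fun e' => (G.ends e'.1).map
    (contractFun x y (fun hh => G.loopless e (by rw [h, Sym2.mk_isDiag_iff]; exact hh)))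
  loopless := by
    rintro ⟨e', hp⟩
    have hl := G.loopless e'
    rw [h] at hp
    simp only
    revert hl hp
    generalize G.ends e' = z
    induction z using Sym2.ind with
    | _ a b =>
      intro hne hdiag
      exact contract_aux _ a b (fun hab => hdiag (by rw [Sym2.mk_isDiag_iff]; exact hab)) hne

/-- The induced ribbon structure on a contraction: the cyclic orders at `x`
and `y` are merged at the contracted vertex after removing `e` and its
parallel edges, and all other cyclic orders are unchanged. -/
def RibbonStruct.contract {V E : Type} [DecidableEq V] [DecidableEq E]
    (χ : RibbonStruct V E) (G : Multigraph V E) (e : E) (x y : V) :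
    RibbonStruct {v : V // v ≠ y} {e' : E // G.ends e' ≠ G.ends e} :=
  ⟨fun v a =>
    let P : Set E := {e' | G.ends e' = G.ends e}
    let Q : Set E := {e' | G.ends e' = G.ends e ∧ e' ≠ e}
    let b : E :=
      if v.1 = x then
        if x ∈ G.ends a.1 then
          (if skipNext χ x Q a.1 = e then skipNext χ y P e else skipNext χ x Q a.1)
        else
          (if skipNext χ y Q a.1 = e then skipNext χ x P e else skipNext χ y Q a.1)
      else χ.next v.1 a.1
    if hb : G.ends b ≠ G.ends e then ⟨b, hb⟩ else a⟩

/-- `T_r` is rotatable at `c` from `g` to `f`: the rotor of `c` in `T_r` is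
`g`, `f = χ(c,g)`, and replacing `g` by `f` again yields an acyclic
configuration, i.e. `T \ g ∪ f` is a spanning tree. -/
def Rotatable {V E : Type} [Fintype V] [Fintype E] [DecidableEq V] [DecidableEq E]
    (G : Multigraph V E) (χ : RibbonStruct V E) (r c : V) (T : Finset E) (g f : E) : Prop :=
  c ≠ r ∧ g ∈ T ∧ c ∈ G.ends g ∧ ¬ G.ReachOn (T.erase g) c r ∧
    χ.next c g = f ∧ G.IsSpanningTree (insert f (T.erase g))


section AuxLemmas

open Relation

namespace Multigraph

variable {V E : Type} [Fintype V] [Fintype E] [DecidableEq V] [DecidableEq E]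

lemma aux_adjOn_symm (G : Multigraph V E) {S : Finset E} {x y : V} (h : G.AdjOn S x y) :
    G.AdjOn S y x := by
  obtain ⟨e, he, hends⟩ := h
  exact ⟨e, he, by rw [hends, Sym2.eq_swap]⟩

lemma aux_reach_subst (G : Multigraph V E) {S S' : Finset E}
    (h : ∀ x y, G.AdjOn S x y → G.ReachOn S' x y) :
    ∀ x y, G.ReachOn S x y → G.ReachOn S' x y := by
  intro x y hr
  induction hr with
  | refl => exact .refl
  | tail _ hstep ih => exact ih.trans (h _ _ hstep)

def auxReachN (G : Multigraph V E) (S : Finset E) (r : V) : ℕ → V → Prop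
  | 0 => fun v => v = r
  | n + 1 => fun v => auxReachN G S r n v ∨ ∃ w, G.AdjOn S v w ∧ auxReachN G S r n w

lemma aux_card_le_of_reach (G : Multigraph V E) (S : Finset E) (r : V)
    (h : ∀ x, G.ReachOn S x r) : Fintype.card V ≤ S.card + 1 := by
  classical
  obtain hV | hV := isEmpty_or_nonempty V
  · simp [Fintype.card_eq_zero]
  have hex : ∀ v : V, ∃ n, G.auxReachN S r n v := by
    intro v
    induction (h v) using Relation.ReflTransGen.head_induction_on with
    | refl => exact ⟨0, rfl⟩
    | head hstep _ ih =>
      obtain ⟨n, hn⟩ := ih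
      exact ⟨n + 1, Or.inr ⟨_, hstep, hn⟩⟩
  let d : V → ℕ := fun v => Nat.find (hex v)
  have hdspec : ∀ v, G.auxReachN S r (d v) v := fun v => Nat.find_spec (hex v)
  have hdle : ∀ v n, G.auxReachN S r n v → d v ≤ n := fun v n hn => Nat.find_le hn
  have hdmin : ∀ v n, n < d v → ¬ G.auxReachN S r n v := fun v n hn => Nat.find_min (hex v) hn
  have key : ∀ v : V, v ≠ r → ∃ p : E × V, p.1 ∈ S ∧ G.ends p.1 = s(v, p.2) ∧ d p.2 < d v := by
    intro v hv
    have hdv := hdspec v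
    have hd0 : d v ≠ 0 := by
      intro h0
      rw [h0] at hdv
      exact hv hdv
    obtain ⟨n, hn⟩ := Nat.exists_eq_succ_of_ne_zero hd0
    rw [hn] at hdv
    rcases hdv with hdv | ⟨w, ⟨ed, hedS, hends⟩, hw⟩
    · exact absurd hdv (hdmin v n (by omega))
    · refine ⟨(ed, w), hedS, hends, ?_⟩
      show d w < d v
      have := hdle w n hw
      omega
  let F : {v : V // v ≠ r} → {ed : E // ed ∈ S} := fun v =>
    ⟨(key v.1 v.2).choose.1, (key v.1 v.2).choose_spec.1⟩
  have hinj : Function.Injective F := by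
    intro u v huv
    by_contra hne
    have hu := (key u.1 u.2).choose_spec
    have hv' := (key v.1 v.2).choose_spec
    have heq : (key u.1 u.2).choose.1 = (key v.1 v.2).choose.1 := congrArg Subtype.val huv
    rw [heq] at hu
    have hends := hu.2.1.symm.trans hv'.2.1
    rw [Sym2.eq_iff] at hends
    rcases hends with ⟨h1, h2⟩ | ⟨h1, h2⟩
    · exact hne (Subtype.ext h1)
    · have l1 := hu.2.2
      have l2 := hv'.2.2
      rw [h2] at l1
      rw [← h1] at l2
      exact lt_asymm l1 l2
  have hcard := Fintype.card_le_of_injective F hinj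
  have h1 : Fintype.card {v : V // v ≠ r} = Fintype.card V - 1 := by
    rw [Fintype.card_subtype_compl, Fintype.card_subtype_eq]
  have h2 : Fintype.card {ed : E // ed ∈ S} = S.card := Fintype.card_coe S
  have h3 : 1 ≤ Fintype.card V := Fintype.card_pos
  omega

end Multigraph

lemma aux_skipNext_eq_next {V E : Type} (χ : RibbonStruct V E) (v : V) (S : Set E) (a : E)
    (h : χ.next v a ∉ S) : skipNext χ v S a = χ.next v a := by
  unfold skipNext
  have hex : ∃ n : ℕ, 0 < n ∧ (χ.next v)^[n] a ∉ S := ⟨1, one_pos, by simpa using h⟩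
  rw [dif_pos hex]
  have hfind : Nat.find hex = 1 := by
    rw [Nat.find_eq_iff]
    refine ⟨⟨one_pos, by simpa using h⟩, ?_⟩
    rintro m hm ⟨h0, -⟩
    omega
  rw [hfind]
  simp

lemma aux_dite_subtype_eq {E : Type} {p : E → Prop} (b f : E) {inst : Decidable (p b)}
    (hb : b = f) (hf : p f) (a : {x // p x}) :
    (if h : p b then (⟨b, h⟩ : {x // p x}) else a) = ⟨f, hf⟩ := by
  subst hb
  rw [dif_pos hf]

end AuxLemmas

/-- rotatability is preserved by deleting a non-tree edge
`e ∉ T ∪ {f}` and by contracting a tree edge `e ∈ T \ {g}`. -/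
theorem rotatable_delete_and_contract
    {V E : Type} [Fintype V] [Fintype E] [DecidableEq V] [DecidableEq E]
    (G : Multigraph V E) (χ : RibbonStruct V E) (hrib : χ.IsRibbon G)
    (h2 : G.TwoConnected) (r c : V) (T : Finset E) (hT : G.IsSpanningTree T)
    (g f : E) (hrot : Rotatable G χ r c T g f) :
    (∀ e : E, e ∉ T → e ≠ f → ∀ (hg' : g ≠ e) (hf' : f ≠ e),
      Rotatable (G.delete e) (χ.delete e) r c
        (T.subtype fun e' => e' ≠ e) ⟨g, hg'⟩ ⟨f, hf'⟩) ∧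
    (∀ e : E, e ∈ T → e ≠ g →
      ∀ (x' y' : V) (hxy : G.ends e = s(x', y')) (hc : c ≠ y') (hr : r ≠ y')
        (hg' : G.ends g ≠ G.ends e) (hf' : G.ends f ≠ G.ends e),
      Rotatable (G.contract e x' y' hxy) (χ.contract G e x' y') ⟨r, hr⟩ ⟨c, hc⟩
        ((T.erase e).subtype fun e' => G.ends e' ≠ G.ends e) ⟨g, hg'⟩ ⟨f, hf'⟩) := by
  obtain ⟨hcr, hgT, hcg, hnreach, hnext, hT'⟩ := hrot
  obtain ⟨hT'reach, hT'card⟩ := hT'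
  obtain ⟨hTreach, hTcard⟩ := hT
  have hV2 : 2 ≤ Fintype.card V := Fintype.one_lt_card_iff_nontrivial.mpr ⟨⟨c, r, hcr⟩⟩
  have hnopar : ∀ a ∈ T, ∀ b ∈ T, a ≠ b → G.ends a ≠ G.ends b := by
    intro a ha b hb hab hends
    have hspan : ∀ x, G.ReachOn (T.erase b) x r := by
      intro x
      refine G.aux_reach_subst ?_ x r (hTreach x r)
      rintro u w ⟨e', he', hends'⟩
      by_cases heb : e' = b
      · exact Relation.ReflTransGen.single
          ⟨a, Finset.mem_erase.mpr ⟨hab, ha⟩, by rw [hends, ← heb, hends']⟩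
      · exact Relation.ReflTransGen.single ⟨e', Finset.mem_erase.mpr ⟨heb, he'⟩, hends'⟩
    have hle := G.aux_card_le_of_reach (T.erase b) r hspan
    rw [Finset.card_erase_of_mem hb, hTcard] at hle
    omega
  have hfTg : f ∉ T.erase g := by
    intro hf
    have hins : insert f (T.erase g) = T.erase g := Finset.insert_eq_self.mpr hf
    rw [hins, Finset.card_erase_of_mem hgT, hTcard] at hT'card
    omega
  constructor
  · -- deletion
    intro e he hef hg' hf'
    have hmemTg : ∀ e'' ∈ insert f (T.erase g), e'' ≠ e := by
      intro e'' h''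
      rcases Finset.mem_insert.mp h'' with h'' | h''
      · rw [h'']; exact fun hh => hef hh.symm
      · exact fun hh => he (hh ▸ Finset.mem_of_mem_erase h'')
    refine ⟨hcr, Finset.mem_subtype.mpr hgT, hcg, ?_, ?_, ?_, ?_⟩
    · -- not reachable
      intro hre
      apply hnreach
      have lift : ∀ a b : V,
          (G.delete e).ReachOn ((T.subtype fun e' => e' ≠ e).erase ⟨g, hg'⟩) a b →
          G.ReachOn (T.erase g) a b := by
        intro a b hab
        induction hab with
        | refl => exact .refl
        | tail _ hstep ih =>
          obtain ⟨e', he', hends'⟩ := hstep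
          obtain ⟨hne', hmem'⟩ := Finset.mem_erase.mp he'
          exact ih.tail ⟨e'.1, Finset.mem_erase.mpr
            ⟨fun hh => hne' (Subtype.ext hh), Finset.mem_subtype.mp hmem'⟩, hends'⟩
      exact lift c r hre
    · -- rotor turns to f
      have hs : skipNext χ c {e} g = f := by
        rw [aux_skipNext_eq_next χ c {e} g (by rw [hnext]; simpa using hf'), hnext]
      have hne2 : ¬ (skipNext χ c {e} g = e) := by rw [hs]; exact hf'
      show (if h : skipNext χ c {e} g = e then (⟨g, hg'⟩ : {e' // e' ≠ e})
            else ⟨skipNext χ c {e} g, h⟩) = ⟨f, hf'⟩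
      rw [dif_neg hne2]
      exact Subtype.ext hs
    · -- spanning reachability
      intro u w
      have hbase := hT'reach u w
      have lift2 : ∀ a b : V, G.ReachOn (insert f (T.erase g)) a b →
          (G.delete e).ReachOn
            (insert ⟨f, hf'⟩ ((T.subtype fun e' => e' ≠ e).erase ⟨g, hg'⟩)) a b := by
        intro a b hab
        induction hab with
        | refl => exact .refl
        | tail _ hstep ih =>
          obtain ⟨e'', h'', hends''⟩ := hstep
          have hne'' : e'' ≠ e := hmemTg e'' h''
          refine ih.tail ⟨⟨e'', hne''⟩, ?_, hends''⟩
          rcases Finset.mem_insert.mp h'' with h'' | h''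
          · exact Finset.mem_insert.mpr (Or.inl (Subtype.ext h''))
          · exact Finset.mem_insert.mpr (Or.inr (Finset.mem_erase.mpr
              ⟨fun hh => (Finset.mem_erase.mp h'').1 (congrArg Subtype.val hh),
               Finset.mem_subtype.mpr (Finset.mem_of_mem_erase h'')⟩))
      exact lift2 u w hbase
    · -- cardinality
      have h1 : (⟨f, hf'⟩ : {e' // e' ≠ e}) ∉ (T.subtype fun e' => e' ≠ e).erase ⟨g, hg'⟩ := by
        intro hmem
        obtain ⟨hne', hmem'⟩ := Finset.mem_erase.mp hmem
        exact hfTg (Finset.mem_erase.mpr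
          ⟨fun hh => hne' (Subtype.ext hh), Finset.mem_subtype.mp hmem'⟩)
      have hfilter : Finset.filter (fun e' => e' ≠ e) T = T :=
        Finset.filter_true_of_mem (fun x hx hxe => he (hxe ▸ hx))
      rw [Finset.card_insert_of_notMem h1,
        Finset.card_erase_of_mem (Finset.mem_subtype.mpr hgT),
        Finset.card_subtype, hfilter, hTcard]
      omega
  · -- contraction
    intro e heT heg x' y' hxy hc hr hg' hf'
    have hxy' : x' ≠ y' := by
      intro hh
      exact G.loopless e (by rw [hxy, Sym2.mk_isDiag_iff]; exact hh)
    have heTg : e ∈ T.erase g := Finset.mem_erase.mpr ⟨heg, heT⟩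
    have hgne : g ≠ e := fun hh => hg' (by rw [hh])
    have hfne : f ≠ e := fun hh => hf' (by rw [hh])
    have hgmem : (⟨g, hg'⟩ : {e' // G.ends e' ≠ G.ends e}) ∈
        (T.erase e).subtype fun e' => G.ends e' ≠ G.ends e :=
      Finset.mem_subtype.mpr (Finset.mem_erase.mpr ⟨hgne, hgT⟩)
    have hφ : ∀ (a : V) (h : a ≠ y') (hp : x' ≠ y'), contractFun x' y' hp a = ⟨a, h⟩ :=
      fun a h _ => dif_neg h
    have hφy : ∀ (hp : x' ≠ y'), contractFun x' y' hp y' = ⟨x', hxy'⟩ := fun _ => dif_pos rfl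
    have hφinv : ∀ (a : V) (u : {v : V // v ≠ y'}) (hp : x' ≠ y'),
        contractFun x' y' hp a = u → a = u.1 ∨ (a = y' ∧ u.1 = x') := by
      intro a u hp hau
      by_cases ha : a = y'
      · right
        refine ⟨ha, ?_⟩
        rw [← hau, ha, hφy]
      · left
        rw [← hau, hφ a ha]
    have hbridgef : ∀ (a : V) (u : {v : V // v ≠ y'}) (hp : x' ≠ y'),
        contractFun x' y' hp a = u →
        G.ReachOn (T.erase g) u.1 a ∧ G.ReachOn (T.erase g) a u.1 := by
      intro a u hp hau
      rcases hφinv a u hp hau with h1 | ⟨h1, h2⟩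
      · rw [h1]
        exact ⟨.refl, .refl⟩
      · constructor
        · exact Relation.ReflTransGen.single ⟨e, heTg, by rw [h1, h2]; exact hxy⟩
        · exact Relation.ReflTransGen.single ⟨e, heTg, by rw [h1, h2, hxy]; exact Sym2.eq_swap⟩
    refine ⟨fun hh => hcr (congrArg Subtype.val hh), hgmem, ?_, ?_, ?_, ?_, ?_⟩
    · -- c is an endpoint of g in the contraction
      exact Sym2.mem_map.mpr ⟨c, hcg, hφ c hc _⟩
    · -- not reachable
      intro hre
      apply hnreach
      have lift : ∀ u w : {v : V // v ≠ y'},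
          (G.contract e x' y' hxy).ReachOn
            (((T.erase e).subtype fun e' => G.ends e' ≠ G.ends e).erase ⟨g, hg'⟩) u w →
          G.ReachOn (T.erase g) u.1 w.1 := by
        intro u w hre'
        induction hre' with
        | refl => exact .refl
        | tail _ hstep ih =>
          obtain ⟨e', he', hends'⟩ := hstep
          obtain ⟨hne', hmem'⟩ := Finset.mem_erase.mp he'
          have heTg' : e'.1 ∈ T.erase g :=
            Finset.mem_erase.mpr ⟨fun hh => hne' (Subtype.ext hh),
              Finset.mem_of_mem_erase (Finset.mem_subtype.mp hmem')⟩
          obtain ⟨⟨a, b⟩, hab⟩ := Quot.exists_rep (G.ends e'.1)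
          have hab' : G.ends e'.1 = s(a, b) := hab.symm
          have hends2 : Sym2.map (contractFun x' y' hxy') (G.ends e'.1) = s(_, _) := hends'
          rw [hab', Sym2.map_pair_eq, Sym2.eq_iff] at hends2
          rcases hends2 with ⟨hma, hwb⟩ | ⟨hwa, hmb⟩
          · exact ih.trans ((hbridgef a _ hxy' hma).1.trans
              ((Relation.ReflTransGen.single ⟨e'.1, heTg', hab'⟩).trans
                (hbridgef b _ hxy' hwb).2))
          · exact ih.trans ((hbridgef b _ hxy' hmb).1.trans
              ((Relation.ReflTransGen.single
                ⟨e'.1, heTg', by rw [hab']; exact Sym2.eq_swap⟩).trans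
                (hbridgef a _ hxy' hwa).2))
      exact lift ⟨c, hc⟩ ⟨r, hr⟩ hre
    · -- rotor turns to f
      have hbval :
          (if c = x' then
            (if x' ∈ G.ends g then
              (if skipNext χ x' {e' : E | G.ends e' = G.ends e ∧ e' ≠ e} g = e then
                skipNext χ y' {e' : E | G.ends e' = G.ends e} e
              else skipNext χ x' {e' : E | G.ends e' = G.ends e ∧ e' ≠ e} g)
            else
              (if skipNext χ y' {e' : E | G.ends e' = G.ends e ∧ e' ≠ e} g = e then
                skipNext χ x' {e' : E | G.ends e' = G.ends e} e
              else skipNext χ y' {e' : E | G.ends e' = G.ends e ∧ e' ≠ e} g))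
          else χ.next c g) = f := by
        by_cases hcx : c = x'
        · have hnx : χ.next x' g = f := by rw [← hcx]; exact hnext
          have hsQ : skipNext χ x' {e' : E | G.ends e' = G.ends e ∧ e' ≠ e} g = f := by
            rw [aux_skipNext_eq_next χ x' _ g (by rw [hnx]; exact fun hh => hf' hh.1), hnx]
          rw [if_pos hcx, if_pos (hcx ▸ hcg), if_neg (by rw [hsQ]; exact hfne)]
          exact hsQ
        · rw [if_neg hcx]
          exact hnext
      exact aux_dite_subtype_eq (p := fun x => G.ends x ≠ G.ends e) _ f hbval hf' ⟨g, hg'⟩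
    · -- spanning reachability
      intro u w
      have hbase := hT'reach u.1 w.1
      have lift2 : ∀ a b : V, G.ReachOn (insert f (T.erase g)) a b →
          (G.contract e x' y' hxy).ReachOn
            (insert ⟨f, hf'⟩ (((T.erase e).subtype fun e' => G.ends e' ≠ G.ends e).erase ⟨g, hg'⟩))
            (contractFun x' y' hxy' a) (contractFun x' y' hxy' b) := by
        intro a b hab
        induction hab with
        | refl => exact .refl
        | tail hchain hstep ih =>
          rename_i p q
          obtain ⟨e'', h'', hends''⟩ := hstep
          by_cases hpe : G.ends e'' = G.ends e
          · have hxyeq : s(p, q) = s(x', y') := hends''.symm.trans (hpe.trans hxy)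
            rw [Sym2.eq_iff] at hxyeq
            have hphi : contractFun x' y' hxy' p = contractFun x' y' hxy' q := by
              rcases hxyeq with ⟨h1, h2⟩ | ⟨h1, h2⟩
              · rw [h1, h2, hφ x' hxy' hxy', hφy hxy']
              · rw [h1, h2, hφ x' hxy' hxy', hφy hxy']
            rw [← hphi]
            exact ih
          · have hmem : (⟨e'', hpe⟩ : {e' // G.ends e' ≠ G.ends e}) ∈
                insert ⟨f, hf'⟩
                  (((T.erase e).subtype fun e' => G.ends e' ≠ G.ends e).erase ⟨g, hg'⟩) := by
              rcases Finset.mem_insert.mp h'' with h'' | h''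
              · exact Finset.mem_insert.mpr (Or.inl (Subtype.ext h''))
              · exact Finset.mem_insert.mpr (Or.inr (Finset.mem_erase.mpr
                  ⟨fun hh => (Finset.mem_erase.mp h'').1 (congrArg Subtype.val hh),
                   Finset.mem_subtype.mpr (Finset.mem_erase.mpr
                    ⟨fun hh => hpe (by rw [show e'' = e from hh]), Finset.mem_of_mem_erase h''⟩)⟩))
            refine ih.tail ⟨⟨e'', hpe⟩, hmem, ?_⟩
            have hmp : Sym2.map (contractFun x' y' hxy') (G.ends e'') =
                s(contractFun x' y' hxy' p, contractFun x' y' hxy' q) := by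
              rw [hends'', Sym2.map_pair_eq]
            exact hmp
      have hres := lift2 u.1 w.1 hbase
      rwa [hφ u.1 u.2 hxy', hφ w.1 w.2 hxy'] at hres
    · -- cardinality
      have hcV : Fintype.card {v : V // v ≠ y'} = Fintype.card V - 1 := by
        rw [Fintype.card_subtype_compl, Fintype.card_subtype_eq]
      have hfS : (⟨f, hf'⟩ : {e' // G.ends e' ≠ G.ends e}) ∉
          ((T.erase e).subtype fun e' => G.ends e' ≠ G.ends e).erase ⟨g, hg'⟩ := by
        intro hmem
        obtain ⟨hne', hmem'⟩ := Finset.mem_erase.mp hmem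
        exact hfTg (Finset.mem_erase.mpr ⟨fun hh => hne' (Subtype.ext hh),
          Finset.mem_of_mem_erase (Finset.mem_subtype.mp hmem')⟩)
      have hT2 : 2 ≤ T.card := by
        have hsub : ({g, e} : Finset E) ⊆ T := by
          intro x hx
          rcases Finset.mem_insert.mp hx with h | h
          · rw [h]; exact hgT
          · rw [Finset.mem_singleton.mp h]; exact heT
        have hle := Finset.card_le_card hsub
        rwa [Finset.card_pair hgne] at hle
      rw [Finset.card_insert_of_notMem hfS, Finset.card_erase_of_mem hgmem,
        Finset.card_subtype,
        Finset.filter_true_of_mem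
          (fun x hx => hnopar x (Finset.mem_of_mem_erase hx) e heT (Finset.mem_erase.mp hx).1),
        Finset.card_erase_of_mem heT, hTcard, hcV]
      omega


end
end

section
/- Let (ρ*, x) be a unicycle on a ribbon graph G with m edges. If the rotor-routing process is iterated 2m times, then the chip traverses each edge of G exactly once in each direction, each rotor makes exactly one full turn, and the final unicycle equals (ρ*, x). -/
open Finset

noncomputable section
open scoped Classical

/-- A sink-free rotor configuration: every vertex carries an incident edge. -/
def SinkFree {V E : Type} (G : Multigraph V E) (cfg : V → E) : Prop :=
  ∀ v, v ∈ G.ends (cfg v)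

/-- One step along the rotors of a sink-free configuration. -/
def SStep {V E : Type} (G : Multigraph V E) (cfg : V → E) (a b : V) : Prop :=
  G.ends (cfg a) = s(a, b)

/-- `v` lies on a directed cycle of the rotors of `cfg`. -/
def OnRotorCycle {V E : Type} (G : Multigraph V E) (cfg : V → E) (v : V) : Prop :=
  Relation.TransGen (SStep G cfg) v v

/-- `(cfg, x)` is a unicycle: a sink-free rotor configuration with exactly one
directed cycle, and `x` a vertex on that cycle. -/
def IsUnicycle {V E : Type} (G : Multigraph V E) (cfg : V → E) (x : V) : Prop :=
  SinkFree G cfg ∧ OnRotorCycle G cfg x ∧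
    ∀ u v, OnRotorCycle G cfg u → OnRotorCycle G cfg v →
      Relation.ReflTransGen (SStep G cfg) u v

/-!
Record the run by its traversals (tail, edge, head). After the chip has left `v` exactly `k`
times, the rotor at `v` is `χᵏ` applied to its initial value, so as long as no traversal
repeats, every vertex is left and entered at most `deg v` times. At a first repetition the
tail vertex has already made a full turn; counting departures against arrivals there puts the
chip back at its start, after which departures equal arrivals everywhere. A vertex whose rotor
has not made a full turn has not yet sent the chip across its initial rotor, so neither has
the vertex that initial rotor points to. Following the initial rotors from any vertex leads
into the unique cycle and so to the start, which has made a full turn; hence every vertex has,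
and the run so far has length `∑ deg v = 2m`. So the first `2m` traversals are distinct, and
all three claims follow by counting.
-/

open Finset Function Relation

theorem Relation.exists_reflTransGen_transGen_self_of_finite {α : Type*} [Finite α]
    {r : α → α → Prop} (h : ∀ a, ∃ b, r a b) (a : α) :
    ∃ b, ReflTransGen r a b ∧ TransGen r b b := by
  choose f hf using h
  have reach : ∀ n b, ReflTransGen r b (f^[n] b) := by
    intro n
    induction n with
    | zero => exact fun b => ReflTransGen.refl
    | succ n ih => exact fun b => (ih b).tail (by rw [iterate_succ_apply']; exact hf _)
  obtain ⟨m, k, hmk, heq⟩ : ∃ m k, m < k ∧ f^[m] a = f^[k] a := by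
    obtain ⟨m, k, hne, heq⟩ := Finite.exists_ne_map_eq_of_infinite fun n => f^[n] a
    rcases hne.lt_or_gt with h | h
    exacts [⟨m, k, h, heq⟩, ⟨k, m, h, heq.symm⟩]
  refine ⟨f^[m] a, reach m a, ?_⟩
  have hcyc : f^[k - m - 1] (f (f^[m] a)) = f^[m] a := by
    rw [← iterate_succ_apply, ← iterate_add_apply, heq]
    congr 1
    omega
  simpa [hcyc] using TransGen.head' (hf _) (reach (k - m - 1) (f (f^[m] a)))

namespace Multigraph

variable {V E : Type} [DecidableEq V]

def incidentEdges [Fintype E] (G : Multigraph V E) (v : V) : Finset E := {e | v ∈ G.ends e}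

theorem degree_eq_card_incidentEdges [Fintype E] (G : Multigraph V E) (v : V) :
    G.degree v = #(G.incidentEdges v) := rfl

theorem mem_incidentEdges [Fintype E] {G : Multigraph V E} {v : V} {e : E} :
    e ∈ G.incidentEdges v ↔ v ∈ G.ends e := by
  simp [incidentEdges]

theorem card_filter_mem_ends [Fintype V] (G : Multigraph V E) (e : E) :
    #{v | v ∈ G.ends e} = 2 := by
  rw [← Sym2.card_toFinset_of_not_isDiag _ (G.loopless e)]
  congr 1
  ext v
  simp

theorem sum_degree [Fintype V] [Fintype E] (G : Multigraph V E) :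
    ∑ v, G.degree v = 2 * Fintype.card E := by
  have h := sum_card_bipartiteAbove_eq_sum_card_bipartiteBelow (fun v e => v ∈ G.ends e)
    (s := (univ : Finset V)) (t := (univ : Finset E))
  simp only [bipartiteAbove, bipartiteBelow, card_filter_mem_ends] at h
  simp [degree, h, mul_comm]

end Multigraph

theorem IsUnicycle.reflTransGen {V E : Type} [Finite V] {G : Multigraph V E} {ρ : V → E} {x : V}
    (huni : IsUnicycle G ρ x) (u : V) : ReflTransGen (SStep G ρ) u x := by
  obtain ⟨w, huw, hw⟩ := exists_reflTransGen_transGen_self_of_finite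
    (r := SStep G ρ) (fun z => ⟨_, (Sym2.other_spec (huni.1 z)).symm⟩) u
  exact huw.trans (huni.2.2 w x hw huni.2.1)

namespace RibbonStruct.IsRibbon

variable {V E : Type} [Fintype V] [Fintype E] {G : Multigraph V E} {χ : RibbonStruct V E}
  {v : V} {e : E}

theorem iterate_mem_ends (hrib : χ.IsRibbon G) (he : v ∈ G.ends e) (k : ℕ) :
    v ∈ G.ends ((χ.next v)^[k] e) := by
  induction k with
  | zero => exact he
  | succ k ih => rw [iterate_succ_apply']; exact hrib.2.1 v _ ih

variable [DecidableEq V]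

theorem minimalPeriod_eq_degree (hrib : χ.IsRibbon G) (he : v ∈ G.ends e) :
    minimalPeriod (χ.next v) e = G.degree v := by
  have hpos := minimalPeriod_pos_of_mem_periodicPts ((hrib.1 v).injective.mem_periodicPts e)
  rw [G.degree_eq_card_incidentEdges, ← card_range (minimalPeriod (χ.next v) e)]
  refine card_nbij (fun k => (χ.next v)^[k] e) (fun k _ => ?_) ?_ fun g hg => ?_
  · exact Multigraph.mem_incidentEdges.2 (hrib.iterate_mem_ends he k)
  · rw [coe_range]
    exact iterate_injOn_Iio_minimalPeriod
  · obtain ⟨k, rfl⟩ := hrib.2.2 v e g he (Multigraph.mem_incidentEdges.1 hg)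
    exact ⟨k % minimalPeriod (χ.next v) e, mem_range.2 (Nat.mod_lt _ hpos),
      iterate_mod_minimalPeriod_eq⟩

theorem iterate_degree (hrib : χ.IsRibbon G) (he : v ∈ G.ends e) :
    (χ.next v)^[G.degree v] e = e := by
  rw [← hrib.minimalPeriod_eq_degree he]
  exact iterate_minimalPeriod

theorem degree_le_sub_of_iterate_eq (hrib : χ.IsRibbon G) (he : v ∈ G.ends e) {a b : ℕ}
    (hab : a < b) (h : (χ.next v)^[a] e = (χ.next v)^[b] e) : G.degree v ≤ b - a := by
  have hper : IsPeriodicPt (χ.next v) (b - a) ((χ.next v)^[a] e) := by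
    rw [IsPeriodicPt, IsFixedPt, ← iterate_add_apply, Nat.sub_add_cancel hab.le, h]
  rw [← hrib.minimalPeriod_eq_degree (hrib.iterate_mem_ends he a)]
  exact hper.minimalPeriod_le (by omega)

end RibbonStruct.IsRibbon

namespace RotorRouting

variable {V E : Type}

def exitEdge (σ : ℕ → (V → E) × V) (j : ℕ) : E := (σ (j + 1)).1 (σ j).2

def traversal (σ : ℕ → (V → E) × V) (j : ℕ) : V × E × V :=
  ((σ j).2, exitEdge σ j, (σ (j + 1)).2)

theorem crosses_iff {G : Multigraph V E} {σ : ℕ → (V → E) × V} {i : ℕ} {e : E} {u w : V} :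
    G.Crosses σ i e u w ↔ traversal σ i = (u, e, w) ∧ G.ends e = s(u, w) := by
  simp only [Multigraph.Crosses, traversal, exitEdge, Prod.mk.injEq]
  constructor
  · rintro ⟨rfl, rfl, rfl, h⟩
    exact ⟨⟨rfl, rfl, rfl⟩, h⟩
  · rintro ⟨⟨rfl, rfl, rfl⟩, h⟩
    exact ⟨rfl, rfl, rfl, h⟩

variable [DecidableEq V]

section Counting

variable (σ : ℕ → (V → E) × V)

def numVisits (n : ℕ) (v : V) : ℕ := #{j ∈ range n | (σ j).2 = v}

def numArrivals (n : ℕ) (v : V) : ℕ := #{j ∈ range n | (σ (j + 1)).2 = v}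

variable {σ}

theorem numVisits_succ (n : ℕ) (v : V) :
    numVisits σ (n + 1) v = numVisits σ n v + if (σ n).2 = v then 1 else 0 := by
  rw [numVisits, range_add_one, filter_insert]
  split_ifs
  · rw [card_insert_of_notMem (by simp), numVisits]
  · rfl

theorem numArrivals_succ (n : ℕ) (v : V) :
    numArrivals σ (n + 1) v = numArrivals σ n v + if (σ (n + 1)).2 = v then 1 else 0 := by
  rw [numArrivals, range_add_one, filter_insert]
  split_ifs
  · rw [card_insert_of_notMem (by simp), numArrivals]
  · rfl

theorem numVisits_add_ite_eq (n : ℕ) (v : V) :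
    numVisits σ n v + (if (σ n).2 = v then 1 else 0)
      = numArrivals σ n v + if (σ 0).2 = v then 1 else 0 := by
  induction n with
  | zero => simp [numVisits, numArrivals]
  | succ n ih =>
    rw [numVisits_succ, numArrivals_succ]
    split_ifs at ih ⊢ <;> omega

theorem numVisits_eq_numArrivals {n : ℕ} (hret : (σ n).2 = (σ 0).2) (v : V) :
    numVisits σ n v = numArrivals σ n v := by
  have h := numVisits_add_ite_eq (σ := σ) n v
  rw [hret] at h
  omega

theorem numVisits_lt_of_lt {s t : ℕ} {v : V} (hst : s < t) (hs : (σ s).2 = v) :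
    numVisits σ s v < numVisits σ t v := by
  have hmono : numVisits σ (s + 1) v ≤ numVisits σ t v :=
    card_le_card (filter_subset_filter _ (range_subset_range.2 hst))
  rw [numVisits_succ, if_pos hs] at hmono
  omega

theorem sum_numVisits [Fintype V] (n : ℕ) : ∑ v, numVisits σ n v = n := by
  simpa [numVisits] using (card_eq_sum_card_fiberwise (f := fun j => (σ j).2) (s := range n)
    (t := univ) fun _ _ => mem_coe.2 (mem_univ _)).symm

end Counting

variable {σ : ℕ → (V → E) × V} {G : Multigraph V E} {χ : RibbonStruct V E} {n : ℕ}

theorem rotor_eq_iterate (hrun : ∀ i < n, G.RRStep χ (σ i) (σ (i + 1))) (v : V) :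
    (σ n).1 v = (χ.next v)^[numVisits σ n v] ((σ 0).1 v) := by
  induction n with
  | zero => rfl
  | succ n ih =>
    rw [(hrun n n.lt_succ_self).1, numVisits_succ]
    by_cases hv : (σ n).2 = v
    · subst hv
      rw [update_self, ih fun i hi => hrun i (by omega), if_pos rfl, iterate_succ_apply']
    · rw [update_of_ne (Ne.symm hv), ih fun i hi => hrun i (by omega), if_neg hv, Nat.add_zero]

theorem exitEdge_eq_iterate (hrun : ∀ i < n, G.RRStep χ (σ i) (σ (i + 1))) {j : ℕ}
    (hj : j < n) :
    exitEdge σ j = (χ.next (σ j).2)^[numVisits σ j (σ j).2 + 1] ((σ 0).1 (σ j).2) := by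
  rw [exitEdge, rotor_eq_iterate fun i hi => hrun i (by omega), numVisits_succ, if_pos rfl]

theorem ends_exitEdge (hrun : ∀ i < n, G.RRStep χ (σ i) (σ (i + 1))) {j : ℕ} (hj : j < n) :
    G.ends (exitEdge σ j) = s((σ j).2, (σ (j + 1)).2) :=
  (hrun j hj).2

theorem numArrivals_le_card (hrun : ∀ i < n, G.RRStep χ (σ i) (σ (i + 1)))
    (hinj : Set.InjOn (traversal σ) (Set.Iio n)) {v : V} {S : Finset E}
    (hS : ∀ j < n, (σ (j + 1)).2 = v → exitEdge σ j ∈ S) : numArrivals σ n v ≤ #S := by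
  refine card_le_card_of_injOn (exitEdge σ) (fun j hj => ?_) fun a ha b hb hab => ?_
  · rw [mem_coe, mem_filter, mem_range] at hj
    exact hS j hj.1 hj.2
  · rw [mem_coe, mem_filter, mem_range] at ha hb
    have htail : (σ a).2 = (σ b).2 := by
      have h := ends_exitEdge hrun ha.1
      rw [hab, ends_exitEdge hrun hb.1, ha.2, hb.2] at h
      exact (Sym2.congr_left.1 h).symm
    exact hinj ha.1 hb.1 (by simp only [traversal, htail, hab, ha.2, hb.2])

theorem exitEdge_injOn (hrun : ∀ i < n, G.RRStep χ (σ i) (σ (i + 1)))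
    (hinj : Set.InjOn (traversal σ) (Set.Iio n)) (v : V) :
    Set.InjOn (exitEdge σ) ↑({j ∈ range n | (σ j).2 = v} : Finset ℕ) := by
  intro a ha b hb hab
  rw [mem_coe, mem_filter, mem_range] at ha hb
  have hhead : (σ (a + 1)).2 = (σ (b + 1)).2 := by
    have h := ends_exitEdge hrun ha.1
    rw [hab, ends_exitEdge hrun hb.1, ha.2, hb.2] at h
    exact (Sym2.congr_right.1 h).symm
  exact hinj ha.1 hb.1 (by simp only [traversal, hhead, hab, ha.2, hb.2])

section Distinct

variable [Fintype E]

theorem exitEdge_mem_incidentEdges (hrun : ∀ i < n, G.RRStep χ (σ i) (σ (i + 1))) {j : ℕ}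
    (hj : j < n) : exitEdge σ j ∈ G.incidentEdges (σ j).2 :=
  Multigraph.mem_incidentEdges.2 (by rw [ends_exitEdge hrun hj]; exact Sym2.mem_mk_left _ _)

theorem exitEdge_mem_incidentEdges_succ (hrun : ∀ i < n, G.RRStep χ (σ i) (σ (i + 1)))
    {j : ℕ} (hj : j < n) : exitEdge σ j ∈ G.incidentEdges (σ (j + 1)).2 :=
  Multigraph.mem_incidentEdges.2 (by rw [ends_exitEdge hrun hj]; exact Sym2.mem_mk_right _ _)

theorem numArrivals_le_degree (hrun : ∀ i < n, G.RRStep χ (σ i) (σ (i + 1)))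
    (hinj : Set.InjOn (traversal σ) (Set.Iio n)) (v : V) : numArrivals σ n v ≤ G.degree v :=
  numArrivals_le_card hrun hinj fun _ hj hv => hv ▸ exitEdge_mem_incidentEdges_succ hrun hj

theorem numArrivals_lt_degree [DecidableEq E] (hrun : ∀ i < n, G.RRStep χ (σ i) (σ (i + 1)))
    (hinj : Set.InjOn (traversal σ) (Set.Iio n)) {u v : V} {g : E} (hg : G.ends g = s(u, v))
    (hunused : ∀ j < n, traversal σ j ≠ (u, g, v)) : numArrivals σ n v < G.degree v := by
  have hgv : g ∈ G.incidentEdges v :=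
    Multigraph.mem_incidentEdges.2 (hg ▸ Sym2.mem_mk_right _ _)
  refine (numArrivals_le_card hrun hinj fun j hj hv => mem_erase.2 ⟨fun hjg => ?_, ?_⟩).trans_lt
    (card_erase_lt_of_mem hgv)
  · have htail : (σ j).2 = u := by
      have h := ends_exitEdge hrun hj
      rw [hjg, hg, hv] at h
      exact (Sym2.congr_left.1 h).symm
    exact hunused j hj (by simp only [traversal, htail, hjg, hv])
  · exact hv ▸ exitEdge_mem_incidentEdges_succ hrun hj

theorem numVisits_le_degree (hrun : ∀ i < n, G.RRStep χ (σ i) (σ (i + 1)))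
    (hinj : Set.InjOn (traversal σ) (Set.Iio n)) (v : V) : numVisits σ n v ≤ G.degree v := by
  refine card_le_card_of_injOn (exitEdge σ) (fun j hj => ?_) (exitEdge_injOn hrun hinj v)
  rw [mem_coe, mem_filter, mem_range] at hj
  exact hj.2 ▸ exitEdge_mem_incidentEdges hrun hj.1

theorem eq_start_of_degree_le_numVisits (hrun : ∀ i < n, G.RRStep χ (σ i) (σ (i + 1)))
    (hinj : Set.InjOn (traversal σ) (Set.Iio n))
    (hfull : G.degree (σ n).2 ≤ numVisits σ n (σ n).2) : (σ n).2 = (σ 0).2 := by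
  have hbal := numVisits_add_ite_eq (σ := σ) n (σ n).2
  have harr := numArrivals_le_degree hrun hinj (σ n).2
  by_contra hne
  rw [if_pos rfl, if_neg (Ne.symm hne)] at hbal
  omega

theorem existsUnique_crosses (hrun : ∀ i < n, G.RRStep χ (σ i) (σ (i + 1)))
    (hinj : Set.InjOn (traversal σ) (Set.Iio n)) {e : E} {u w : V}
    (hvis : numVisits σ n u = G.degree u) (he : G.ends e = s(u, w)) :
    ∃! i, i < n ∧ G.Crosses σ i e u w := by
  simp only [crosses_iff, he, and_true]
  obtain ⟨j, hj, rfl⟩ := surj_on_of_inj_on_of_card_le (fun j _ => exitEdge σ j)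
    (fun j hj => by
      rw [mem_filter, mem_range] at hj
      exact hj.2 ▸ exitEdge_mem_incidentEdges hrun hj.1)
    (fun _ _ ha hb hab => exitEdge_injOn hrun hinj u ha hb hab)
    (by rw [← Multigraph.degree_eq_card_incidentEdges, ← hvis]; rfl) e
    (Multigraph.mem_incidentEdges.2 (he ▸ Sym2.mem_mk_left _ _))
  rw [mem_filter, mem_range] at hj
  have htj : traversal σ j = (u, exitEdge σ j, w) := by
    have h := ends_exitEdge hrun hj.1
    rw [he, hj.2] at h
    simp only [traversal, hj.2, Sym2.congr_right.1 h]
  exact ⟨j, ⟨hj.1, htj⟩, fun i ⟨hi, hit⟩ => hinj hi hj.1 (hit.trans htj.symm)⟩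

theorem degree_le_numVisits_of_traversal_eq [Fintype V] (hrib : χ.IsRibbon G)
    (hsf : SinkFree G (σ 0).1) (hrun : ∀ i < n, G.RRStep χ (σ i) (σ (i + 1))) {s t : ℕ}
    (hst : s < t) (ht : t < n)
    (h : traversal σ s = traversal σ t) : G.degree (σ t).2 ≤ numVisits σ t (σ t).2 := by
  have htail : (σ s).2 = (σ t).2 := congrArg Prod.fst h
  have hedge : exitEdge σ s = exitEdge σ t := congrArg (fun m => m.2.1) h
  rw [exitEdge_eq_iterate hrun (hst.trans ht), exitEdge_eq_iterate hrun ht, htail] at hedge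
  have hlt := numVisits_lt_of_lt hst htail
  have := hrib.degree_le_sub_of_iterate_eq (hsf _) (by omega) hedge
  omega

theorem numArrivals_lt_degree_of_numVisits_lt [Fintype V] [DecidableEq E] (hrib : χ.IsRibbon G)
    (hsf : SinkFree G (σ 0).1) (hrun : ∀ i < n, G.RRStep χ (σ i) (σ (i + 1)))
    (hinj : Set.InjOn (traversal σ) (Set.Iio n)) {u u' : V} (hstep : SStep G (σ 0).1 u u')
    (hu : numVisits σ n u < G.degree u) : numArrivals σ n u' < G.degree u' := by
  refine numArrivals_lt_degree hrun hinj hstep fun j hj hju => ?_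
  have htail : (σ j).2 = u := congrArg Prod.fst hju
  have hedge : exitEdge σ j = (σ 0).1 u := congrArg (fun m => m.2.1) hju
  rw [exitEdge_eq_iterate hrun hj, htail] at hedge
  -- leaving `u` along its initial rotor again takes a full turn of the rotor at `u`
  have hturn := hrib.degree_le_sub_of_iterate_eq (hsf u) (a := 0) (Nat.succ_pos _) hedge.symm
  have hlt := numVisits_lt_of_lt hj htail
  omega

theorem numVisits_lt_degree_of_reflTransGen [Fintype V] [DecidableEq E] (hrib : χ.IsRibbon G)
    (hsf : SinkFree G (σ 0).1) (hrun : ∀ i < n, G.RRStep χ (σ i) (σ (i + 1)))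
    (hinj : Set.InjOn (traversal σ) (Set.Iio n)) (hret : (σ n).2 = (σ 0).2) {u w : V}
    (h : ReflTransGen (SStep G (σ 0).1) u w) (hu : numVisits σ n u < G.degree u) :
    numVisits σ n w < G.degree w := by
  induction h with
  | refl => exact hu
  | tail _ hstep ih =>
    rw [numVisits_eq_numArrivals hret]
    exact numArrivals_lt_degree_of_numVisits_lt hrib hsf hrun hinj hstep ih

theorem numVisits_eq_degree_of_return [Fintype V] [DecidableEq E] (hrib : χ.IsRibbon G)
    (huni : IsUnicycle G (σ 0).1 (σ 0).2) (hrun : ∀ i < n, G.RRStep χ (σ i) (σ (i + 1)))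
    (hinj : Set.InjOn (traversal σ) (Set.Iio n)) (hret : (σ n).2 = (σ 0).2)
    (hfull : G.degree (σ 0).2 ≤ numVisits σ n (σ 0).2) (v : V) :
    numVisits σ n v = G.degree v :=
  (numVisits_le_degree hrun hinj v).antisymm <| not_lt.1 fun hv =>
    (numVisits_lt_degree_of_reflTransGen hrib huni.1 hrun hinj hret (huni.reflTransGen v) hv).not_ge
      hfull

theorem traversal_injOn [Fintype V] [DecidableEq E] (hrib : χ.IsRibbon G)
    (huni : IsUnicycle G (σ 0).1 (σ 0).2)
    (hrun : ∀ i < 2 * Fintype.card E, G.RRStep χ (σ i) (σ (i + 1))) :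
    Set.InjOn (traversal σ) (Set.Iio (2 * Fintype.card E)) := by
  suffices ∀ t ≤ 2 * Fintype.card E, Set.InjOn (traversal σ) (Set.Iio t) from this _ le_rfl
  intro t
  induction t with
  | zero => simp
  | succ t ih =>
    intro ht
    have hinj := ih (by omega)
    have hrun' : ∀ i < t, G.RRStep χ (σ i) (σ (i + 1)) := fun i hi => hrun i (by omega)
    rw [← Order.succ_eq_add_one, Order.Iio_succ_eq_insert, Set.injOn_insert Set.self_notMem_Iio]
    refine ⟨hinj, fun ⟨s, hs, hrep⟩ => ?_⟩
    have hfull := degree_le_numVisits_of_traversal_eq hrib huni.1 hrun hs ht hrep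
    have hret := eq_start_of_degree_le_numVisits hrun' hinj hfull
    have hvis := numVisits_eq_degree_of_return hrib huni hrun' hinj hret (hret ▸ hfull)
    have : t = 2 * Fintype.card E := by
      rw [← sum_numVisits (σ := σ) t, sum_congr rfl fun v _ => hvis v, G.sum_degree]
    omega

theorem numVisits_eq_degree [Fintype V]
    (hrun : ∀ i < 2 * Fintype.card E, G.RRStep χ (σ i) (σ (i + 1)))
    (hinj : Set.InjOn (traversal σ) (Set.Iio (2 * Fintype.card E))) (v : V) :
    numVisits σ (2 * Fintype.card E) v = G.degree v :=
  (sum_eq_sum_iff_of_le fun v _ => numVisits_le_degree hrun hinj v).1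
    (by rw [sum_numVisits, G.sum_degree]) v (mem_univ v)

end Distinct

end RotorRouting

theorem unicycle_full_period_general
    {V E : Type} [Fintype V] [Fintype E] [DecidableEq V] [DecidableEq E]
    (G : Multigraph V E) (χ : RibbonStruct V E) (hrib : χ.IsRibbon G)
    (σ : ℕ → (V → E) × V)
    (huni : IsUnicycle G (σ 0).1 (σ 0).2)
    (hstep : ∀ i, i < 2 * Fintype.card E → G.RRStep χ (σ i) (σ i.succ)) :
    σ (2 * Fintype.card E) = σ 0 ∧
    (∀ (e : E) (u w : V), G.ends e = s(u, w) →
      ∃! i : ℕ, i < 2 * Fintype.card E ∧ G.Crosses σ i e u w) ∧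
    (∀ v : V, ((Finset.range (2 * Fintype.card E)).filter fun i => (σ i).2 = v).card
        = G.degree v) := by
  have hinj := RotorRouting.traversal_injOn hrib huni hstep
  have hvis := RotorRouting.numVisits_eq_degree hstep hinj
  have hrot : (σ (2 * Fintype.card E)).1 = (σ 0).1 := funext fun v => by
    rw [RotorRouting.rotor_eq_iterate hstep, hvis, hrib.iterate_degree (huni.1 v)]
  have hchip := RotorRouting.eq_start_of_degree_le_numVisits hstep hinj (hvis _).ge
  refine ⟨Prod.ext hrot hchip, fun e u w he => ?_, hvis⟩
  exact RotorRouting.existsUnique_crosses hstep hinj (hvis u) he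

/-- iterating the rotor-routing process `2|E|` times starting
from a unicycle traverses each edge exactly once in each direction, turns
every rotor exactly one full turn, and returns to the starting unicycle. -/
theorem unicycle_full_period
    {V E : Type} [Fintype V] [Fintype E] [DecidableEq V] [DecidableEq E]
    (G : Multigraph V E) (χ : RibbonStruct V E) (hrib : χ.IsRibbon G)
    (hG : G.Connected) (σ : ℕ → (V → E) × V)
    (huni : IsUnicycle G (σ 0).1 (σ 0).2)
    (hstep : ∀ i, i < 2 * Fintype.card E → G.RRStep χ (σ i) (σ i.succ)) :
    σ (2 * Fintype.card E) = σ 0 ∧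
    (∀ (e : E) (u w : V), G.ends e = s(u, w) →
      ∃! i : ℕ, i < 2 * Fintype.card E ∧ G.Crosses σ i e u w) ∧
    (∀ v : V, ((Finset.range (2 * Fintype.card E)).filter fun i => (σ i).2 = v).card
        = G.degree v) :=
  unicycle_full_period_general G χ hrib σ huni hstep

end
end

section
/- Let G be a ribbon graph with an edge f between vertices c and s, and let T be a spanning tree. During the execution of the single-chip rotor-routing algorithm with input spanning tree T, chip at c, and sink s, no rotor makes more than one full turn and no edge is crossed by the chip more than once in each direction. -/
open Finset

noncomputable section
open scoped Classical

/-!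
By induction on time, no vertex has been visited more than its degree: if this holds up to
time `i`, no rotor has completed a full turn, so successive departures from a vertex `u` use
distinct edges. Hence the arrivals at `v` use pairwise distinct edges, none of them incident to
the sink, and there are at most `deg v` of them, at most `deg v - 1` if `v = c` (the edge `f`
goes to the sink); adding the initial visit to `c` gives at most `deg v` visits. With this
bound, two crossings of `e` from `u` to `w` would be two departures from `u` within one turn of
its rotor along the same edge.
-/

namespace Multigraph

section Ribbon

variable {V E : Type} [Fintype V] [Fintype E] {G : Multigraph V E} {χ : RibbonStruct V E}

theorem mem_ends_iterate_next (hrib : χ.IsRibbon G) {u : V} {e : E} (he : u ∈ G.ends e)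
    (m : ℕ) : u ∈ G.ends ((χ.next u)^[m] e) := by
  induction m with
  | zero => exact he
  | succ k ih => rw [Function.iterate_succ_apply']; exact hrib.2.1 u _ ih

variable [DecidableEq V]

theorem degree_le_of_isPeriodicPt (hrib : χ.IsRibbon G) {u : V} {e : E} (he : u ∈ G.ends e)
    {d : ℕ} (hd : 0 < d) (hper : Function.IsPeriodicPt (χ.next u) d e) : G.degree u ≤ d := by
  have hcover : (univ.filter fun g => u ∈ G.ends g) ⊆
      (range d).image fun m => (χ.next u)^[m] e := by
    intro g hg
    obtain ⟨m, rfl⟩ := hrib.2.2 u e g he (mem_filter.1 hg).2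
    exact mem_image.2 ⟨m % d, mem_range.2 (Nat.mod_lt _ hd), hper.iterate_mod_apply m⟩
  calc G.degree u ≤ #((range d).image fun m => (χ.next u)^[m] e) := card_le_card hcover
    _ ≤ d := card_image_le.trans (card_range d).le

theorem iterate_next_ne (hrib : χ.IsRibbon G) {u : V} {e : E} (he : u ∈ G.ends e)
    {a b : ℕ} (hab : a < b) (hba : b - a < G.degree u) :
    (χ.next u)^[a] e ≠ (χ.next u)^[b] e := by
  intro heq
  have hper : Function.IsPeriodicPt (χ.next u) (b - a) ((χ.next u)^[a] e) := by
    rw [Function.IsPeriodicPt, Function.IsFixedPt, ← Function.iterate_add_apply,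
      Nat.sub_add_cancel hab.le, heq]
  exact (degree_le_of_isPeriodicPt hrib (mem_ends_iterate_next hrib he a)
    (Nat.sub_pos_of_lt hab) hper).not_gt hba

end Ribbon

theorem card_avoiding_add_le_degree {V E : Type} [Fintype E] [DecidableEq V]
    (G : Multigraph V E) {c s v : V} {f : E} (hf : G.ends f = s(c, s)) :
    #(univ.filter fun e => v ∈ G.ends e ∧ s ∉ G.ends e) + (if c = v then 1 else 0)
      ≤ G.degree v := by
  have hsub : (univ.filter fun e => v ∈ G.ends e ∧ s ∉ G.ends e) ⊆
      univ.filter fun e => v ∈ G.ends e :=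
    monotone_filter_right _ fun _ _ h => h.1
  split_ifs with hcv
  · subst hcv
    have hf_mem : f ∈ univ.filter fun e => c ∈ G.ends e := by simp [hf]
    have hsub' : (univ.filter fun e => c ∈ G.ends e ∧ s ∉ G.ends e) ⊆
        (univ.filter fun e => c ∈ G.ends e).erase f := by
      intro e he
      refine mem_erase.2 ⟨?_, hsub he⟩
      rintro rfl
      simp [hf] at he
    have := card_le_card hsub'
    rw [card_erase_of_mem hf_mem] at this
    have := card_pos.2 ⟨f, hf_mem⟩
    unfold degree
    omega
  · simpa [degree] using card_le_card hsub

end Multigraph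

section RotorRouting

variable {V E : Type} [DecidableEq V]

def chipVisits (σ : ℕ → (V → E) × V) (u : V) (i : ℕ) : ℕ :=
  #((range i).filter fun j => (σ j).2 = u)

def arrivalTimes (σ : ℕ → (V → E) × V) (v : V) (i : ℕ) : Finset ℕ :=
  (range i).filter fun j => (σ (j + 1)).2 = v

variable {σ : ℕ → (V → E) × V}

theorem chipVisits_mono (u : V) : Monotone (chipVisits σ u) :=
  fun _ _ h => card_le_card (filter_subset_filter _ (range_subset_range.2 h))

theorem chipVisits_succ_of_eq {u : V} {j : ℕ} (hj : (σ j).2 = u) :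
    chipVisits σ u (j + 1) = chipVisits σ u j + 1 := by
  rw [chipVisits, range_add_one, filter_insert, if_pos hj, card_insert_of_notMem (by simp)]
  rfl

theorem chipVisits_succ_of_ne {u : V} {j : ℕ} (hj : (σ j).2 ≠ u) :
    chipVisits σ u (j + 1) = chipVisits σ u j := by
  rw [chipVisits, range_add_one, filter_insert, if_neg hj]
  rfl

/-- Every visit after the initial one is preceded by an arrival. -/
theorem chipVisits_succ_eq_card_arrivalTimes (v : V) (i : ℕ) :
    chipVisits σ v (i + 1) = #(arrivalTimes σ v i) + if (σ 0).2 = v then 1 else 0 := by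
  simp only [chipVisits, arrivalTimes, card_filter]
  exact sum_range_succ' _ i

namespace Multigraph

variable {G : Multigraph V E} {χ : RibbonStruct V E} {s : V} {n : ℕ}

theorem IsRun.rotor_eq_iterate (hrun : G.IsRun χ s σ n) {i : ℕ} (hi : i ≤ n) (u : V) :
    (σ i).1 u = (χ.next u)^[chipVisits σ u i] ((σ 0).1 u) := by
  induction i with
  | zero => simp [chipVisits]
  | succ k ih =>
    rw [(hrun k hi).2.1]
    by_cases hk : (σ k).2 = u
    · rw [hk, Function.update_self, chipVisits_succ_of_eq hk, Function.iterate_succ_apply',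
        ih (Nat.le_of_succ_le hi)]
    · rw [Function.update_of_ne (Ne.symm hk), chipVisits_succ_of_ne hk, ih (Nat.le_of_succ_le hi)]

variable [Fintype V] [Fintype E]

/-- As long as the rotor at `u` has not completed a full turn, the chip leaves `u` along a
different edge each time. -/
theorem IsRun.rotor_ne_of_lt (hrun : G.IsRun χ s σ n) (hrib : χ.IsRibbon G) {u : V}
    (hu : u ∈ G.ends ((σ 0).1 u)) {j j' : ℕ} (hjj' : j < j') (hj' : j' < n)
    (hj : (σ j).2 = u) (hj'u : (σ j').2 = u) (hdeg : chipVisits σ u (j' + 1) ≤ G.degree u) :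
    (σ (j + 1)).1 u ≠ (σ (j' + 1)).1 u := by
  rw [hrun.rotor_eq_iterate (i := j + 1) (by omega),
    hrun.rotor_eq_iterate (i := j' + 1) (by omega)]
  have hlt : chipVisits σ u (j + 1) ≤ chipVisits σ u j' := chipVisits_mono u hjj'
  rw [chipVisits_succ_of_eq hj] at hlt ⊢
  rw [chipVisits_succ_of_eq hj'u] at hdeg ⊢
  exact iterate_next_ne hrib hu (by omega) (by omega)

/-- Before any rotor overspins, the chip enters `v` along pairwise distinct edges, none of them
incident to the sink. -/
theorem IsRun.card_arrivalTimes_le (hrun : G.IsRun χ s σ n) (hrib : χ.IsRibbon G)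
    (hinc : ∀ u, u ≠ s → u ∈ G.ends ((σ 0).1 u)) {i : ℕ} (hin : i < n)
    (hvis : ∀ u, chipVisits σ u i ≤ G.degree u) (v : V) :
    #(arrivalTimes σ v i) ≤ #(univ.filter fun e => v ∈ G.ends e ∧ s ∉ G.ends e) := by
  have hends : ∀ j ∈ arrivalTimes σ v i, G.ends ((σ (j + 1)).1 (σ j).2) = s((σ j).2, v) := by
    intro j hj
    rw [(hrun j (by simp [arrivalTimes] at hj; omega)).2.2, (mem_filter.1 hj).2]
  have hne : ∀ j ∈ arrivalTimes σ v i, ∀ j' ∈ arrivalTimes σ v i, j < j' →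
      (σ (j + 1)).1 (σ j).2 ≠ (σ (j' + 1)).1 (σ j').2 := by
    intro j hj j' hj' hjj' heq
    have hsrc : (σ j').2 = (σ j).2 :=
      Sym2.congr_left.1 (by rw [← hends j hj, ← hends j' hj', heq])
    have hj'i : j' < i := mem_range.1 (mem_filter.1 hj').1
    refine hrun.rotor_ne_of_lt hrib (hinc _ (hrun j (by omega)).1) hjj' (by omega) rfl hsrc ?_
      (hsrc ▸ heq)
    exact (chipVisits_mono _ hj'i).trans (hvis _)
  refine card_le_card_of_injOn (fun j => (σ (j + 1)).1 (σ j).2) ?_ ?_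
  · intro j hj
    rw [mem_coe] at hj
    have hj' := mem_filter.1 hj
    have hji : j < i := mem_range.1 hj'.1
    rw [mem_coe, mem_filter, hends j hj, Sym2.mem_iff, Sym2.mem_iff]
    refine ⟨mem_univ _, Or.inr rfl, ?_⟩
    rintro (h | h)
    · exact (hrun j (by omega)).1 h.symm
    · exact (hrun (j + 1) (by omega)).1 (hj'.2.trans h.symm)
  · intro j hj j' hj' heq
    by_contra hjj'
    rcases Nat.lt_or_gt_of_ne hjj' with h | h
    · exact hne j hj j' hj' h heq
    · exact hne j' hj' j hj h heq.symm

theorem IsRun.chipVisits_le_degree (hrun : G.IsRun χ s σ n) (hrib : χ.IsRibbon G)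
    (hinc : ∀ u, u ≠ s → u ∈ G.ends ((σ 0).1 u)) {c : V} {f : E} (hf : G.ends f = s(c, s))
    (hc : (σ 0).2 = c) : ∀ i ≤ n, ∀ v, chipVisits σ v i ≤ G.degree v := by
  intro i
  induction i with
  | zero => simp [chipVisits]
  | succ i ih =>
    intro hi v
    calc chipVisits σ v (i + 1)
        = #(arrivalTimes σ v i) + if c = v then 1 else 0 := by
          rw [chipVisits_succ_eq_card_arrivalTimes, hc]
      _ ≤ #(univ.filter fun e => v ∈ G.ends e ∧ s ∉ G.ends e) + if c = v then 1 else 0 := by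
          gcongr
          exact hrun.card_arrivalTimes_le hrib hinc hi (ih (by omega)) v
      _ ≤ G.degree v := G.card_avoiding_add_le_degree hf

theorem IsRun.eq_of_crosses (hrun : G.IsRun χ s σ n) (hrib : χ.IsRibbon G)
    (hinc : ∀ u, u ≠ s → u ∈ G.ends ((σ 0).1 u)) (hvis : ∀ v, chipVisits σ v n ≤ G.degree v)
    {e : E} {u w : V} {i i' : ℕ} (hi : i < n) (hi' : i' < n)
    (hcross : G.Crosses σ i e u w) (hcross' : G.Crosses σ i' e u w) : i = i' := by
  have key : ∀ j j', j < j' → j' < n → G.Crosses σ j e u w → G.Crosses σ j' e u w → False := by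
    rintro j j' hjj' hj' ⟨hju, -, hje, -⟩ ⟨hj'u, -, hj'e, -⟩
    exact hrun.rotor_ne_of_lt hrib (hinc u (hju ▸ (hrun j (by omega)).1)) hjj' hj' hju hj'u
      ((chipVisits_mono u hj').trans (hvis u)) (hje.trans hj'e.symm)
  by_contra hne
  rcases Nat.lt_or_gt_of_ne hne with h | h
  · exact key i i' h hi' hcross hcross'
  · exact key i' i h hi hcross' hcross

end Multigraph

end RotorRouting

theorem no_overspins_general
    {V E : Type} [Fintype V] [Fintype E] [DecidableEq V] [DecidableEq E]
    (G : Multigraph V E) (χ : RibbonStruct V E) (hrib : χ.IsRibbon G)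
    (c s : V) (f : E) (hf : G.ends f = s(c, s))
    (T : Finset E)
    (cfg0 : V → E) (h0 : G.IsRotorCfg s T cfg0)
    (σ : ℕ → (V → E) × V) (hσ0 : σ 0 = (cfg0, c))
    (n : ℕ) (hrun : G.IsRun χ s σ n) :
    (∀ v : V, ((Finset.range n).filter fun i => (σ i).2 = v).card ≤ G.degree v) ∧
    (∀ (e : E) (u w : V), G.ends e = s(u, w) →
      ((Finset.range n).filter fun i => G.Crosses σ i e u w).card ≤ 1) := by
  have hinc : ∀ u, u ≠ s → u ∈ G.ends ((σ 0).1 u) := fun u hu => hσ0 ▸ (h0 u hu).2.1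
  have hvis : ∀ v, chipVisits σ v n ≤ G.degree v :=
    hrun.chipVisits_le_degree hrib hinc hf (by rw [hσ0]) n le_rfl
  refine ⟨hvis, fun e u w _ => card_le_one.2 fun i hi i' hi' => ?_⟩
  rw [mem_filter, mem_range] at hi hi'
  exact hrun.eq_of_crosses hrib hinc hvis hi.1 hi'.1 hi.2 hi'.2

/-- during a run of the single-chip rotor-routing algorithm with
chip `c` and sink `s`, where `c` and `s` are joined by an edge `f`, no rotor
makes more than one full turn (the chip leaves each vertex at most its degree
many times) and no edge is crossed more than once in each direction. -/
theorem no_overspins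
    {V E : Type} [Fintype V] [Fintype E] [DecidableEq V] [DecidableEq E]
    (G : Multigraph V E) (χ : RibbonStruct V E) (hrib : χ.IsRibbon G)
    (hG : G.Connected) (c s : V) (f : E) (hf : G.ends f = s(c, s))
    (T : Finset E) (hT : G.IsSpanningTree T)
    (cfg0 : V → E) (h0 : G.IsRotorCfg s T cfg0)
    (σ : ℕ → (V → E) × V) (hσ0 : σ 0 = (cfg0, c))
    (n : ℕ) (hrun : G.IsRun χ s σ n) :
    (∀ v : V, ((Finset.range n).filter fun i => (σ i).2 = v).card ≤ G.degree v) ∧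
    (∀ (e : E) (u w : V), G.ends e = s(u, w) →
      ((Finset.range n).filter fun i => G.Crosses σ i e u w).card ≤ 1) :=
  no_overspins_general G χ hrib c s f hf T cfg0 h0 σ hσ0 n hrun

end
end
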